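/- arXiv:1112.0676 — 6 statements merged into one kernel-verified Lean document; each statement's English description precedes it below -/
import Mathlib

section
/- If A is the Young function A(t) = t^p log(e+t)^{p-1+δ} for p>1 and δ>0, then its complementary Young function satisfies Ā(t) ≈ t^{p'}/log(e+t)^{1+δ'} where δ' = δ/(p-1) and p' = p/(p-1); that is, there exist constants c,C>0 such that c·t^{p'}/log(e+t)^{1+δ'} ≤ Ā(t) ≤ C·t^{p'}/log(e+t)^{1+δ'} for all t ≥ 0. -/
open Real

/-- The complementary Young function `Ā(t) = sup_{s>0} (s·t − A(s))`. -/
noncomputable def youngConj (A : ℝ → ℝ) (t : ℝ) : ℝ :=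
  sSup {x : ℝ | ∃ s : ℝ, 0 < s ∧ x = s * t - A s}


private lemma one_le_LL {t : ℝ} (ht : 0 ≤ t) : 1 ≤ Real.log (Real.exp 1 + t) := by
  rw [Real.le_log_iff_exp_le (by positivity)]
  linarith

private lemma log2_le_one : Real.log 2 ≤ 1 := by
  nlinarith [Real.log_le_sub_one_of_pos (by norm_num : (0:ℝ) < 2)]

private lemma add_rpow_le {a b m : ℝ} (ha : 0 < a) (hb : 0 < b) (hm : 1 ≤ m) :
    a ^ m + b ^ m ≤ (a + b) ^ m := by
  have hab : 0 < a + b := by linarith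
  have h1 : a ^ m ≤ a * (a + b) ^ (m - 1) := by
    calc a ^ m = a ^ (1 + (m - 1)) := by ring_nf
      _ = a ^ (1:ℝ) * a ^ (m - 1) := Real.rpow_add ha 1 (m-1)
      _ ≤ a ^ (1:ℝ) * (a + b) ^ (m - 1) := by
          apply mul_le_mul_of_nonneg_left _ (Real.rpow_nonneg ha.le 1)
          exact Real.rpow_le_rpow ha.le (by linarith) (by linarith)
      _ = a * (a + b) ^ (m - 1) := by rw [Real.rpow_one]
  have h2 : b ^ m ≤ b * (a + b) ^ (m - 1) := by
    calc b ^ m = b ^ (1 + (m - 1)) := by ring_nf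
      _ = b ^ (1:ℝ) * b ^ (m - 1) := Real.rpow_add hb 1 (m-1)
      _ ≤ b ^ (1:ℝ) * (a + b) ^ (m - 1) := by
          apply mul_le_mul_of_nonneg_left _ (Real.rpow_nonneg hb.le 1)
          exact Real.rpow_le_rpow hb.le (by linarith) (by linarith)
      _ = b * (a + b) ^ (m - 1) := by rw [Real.rpow_one]
  calc a ^ m + b ^ m ≤ (a + b) * (a + b) ^ (m - 1) := by linarith [h1, h2]
    _ = (a + b) ^ (1:ℝ) * (a + b) ^ (m - 1) := by rw [Real.rpow_one]
    _ = (a + b) ^ (1 + (m - 1)) := (Real.rpow_add hab 1 (m-1)).symm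
    _ = (a + b) ^ m := by ring_nf

private lemma crux2 (r : ℝ) (hr : 0 < r) :
    ∃ C₂ : ℝ, 1 ≤ C₂ ∧ ∀ t : ℝ, 0 ≤ t → ∀ s : ℝ, 0 ≤ s → s ≤ t ^ r →
      Real.log (Real.exp 1 + s) ≤ C₂ * Real.log (Real.exp 1 + t) := by
  set m : ℝ := max 1 r with hm
  have hm1 : 1 ≤ m := le_max_left _ _
  refine ⟨2 * m, by linarith, ?_⟩
  intro t ht s hs hst
  have hL1 : 1 ≤ Real.log (Real.exp 1 + t) := one_le_LL ht
  have he1 : (1:ℝ) ≤ Real.exp 1 := by linarith [Real.add_one_le_exp (1:ℝ)]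
  rcases le_or_gt t 1 with h1 | h1
  · have hs1 : s ≤ 1 := le_trans hst (Real.rpow_le_one ht h1 hr.le)
    have : Real.log (Real.exp 1 + s) ≤ Real.log (Real.exp 1 * Real.exp 1) := by
      apply Real.log_le_log (by positivity)
      have he2 : (2:ℝ) ≤ Real.exp 1 := by linarith [Real.add_one_le_exp (1:ℝ)]
      nlinarith
    rw [Real.log_mul (Real.exp_ne_zero 1) (Real.exp_ne_zero 1), Real.log_exp] at this
    calc Real.log (Real.exp 1 + s) ≤ 2 := by linarith
      _ ≤ 2 * m * 1 := by linarith
      _ ≤ 2 * m * Real.log (Real.exp 1 + t) := by nlinarith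
  · have hsm : s ≤ t ^ m :=
      le_trans hst (Real.rpow_le_rpow_of_exponent_le h1.le (le_max_right _ _))
    have hem : Real.exp 1 ≤ Real.exp 1 ^ m := by
      calc Real.exp 1 = Real.exp 1 ^ (1:ℝ) := (Real.rpow_one _).symm
        _ ≤ Real.exp 1 ^ m := Real.rpow_le_rpow_of_exponent_le he1 hm1
    have hsum : Real.exp 1 + s ≤ (Real.exp 1 + t) ^ m := by
      have := add_rpow_le (Real.exp_pos 1) (lt_trans one_pos h1) hm1
      linarith
    calc Real.log (Real.exp 1 + s) ≤ Real.log ((Real.exp 1 + t) ^ m) :=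
          Real.log_le_log (by positivity) hsum
      _ = m * Real.log (Real.exp 1 + t) := Real.log_rpow (by positivity) m
      _ ≤ 2 * m * Real.log (Real.exp 1 + t) := by nlinarith

private lemma crux1 (r ν : ℝ) (hr : 0 < r) (hν : 1 ≤ ν) :
    ∃ c₁ : ℝ, 0 < c₁ ∧ c₁ ≤ 1 ∧ ∀ t : ℝ, 0 ≤ t →
      c₁ * Real.log (Real.exp 1 + t) ≤
        Real.log (Real.exp 1 + t ^ r / Real.log (Real.exp 1 + t) ^ ν) := by
  have hν0 : 0 < ν := by linarith
  set U : ℝ := max 4 ((8 * ν / r) ^ 2) with hU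
  have hU4 : (4:ℝ) ≤ U := le_max_left _ _
  have hU0 : 0 < U := by linarith
  refine ⟨min (1/U) (r/2), by positivity, ?_, ?_⟩
  · calc min (1/U) (r/2) ≤ 1/U := min_le_left _ _
      _ ≤ 1 := by rw [div_le_one hU0]; linarith
  intro t ht
  set L := Real.log (Real.exp 1 + t) with hLdef
  have hL1 : 1 ≤ L := one_le_LL ht
  have hLν : (0:ℝ) < L ^ ν := Real.rpow_pos_of_pos (by linarith) ν
  have hσ0 : 0 ≤ t ^ r / L ^ ν := by positivity
  have hM1 : 1 ≤ Real.log (Real.exp 1 + t ^ r / L ^ ν) := one_le_LL hσ0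
  rcases le_or_gt L U with hcase | hcase
  · have h' : min (1/U) (r/2) * L ≤ (1/U) * U :=
      mul_le_mul (min_le_left _ _) hcase (by linarith) (by positivity)
    have h'' : 1/U*U = 1 := by field_simp
    linarith
  · have ht0 : 0 < t := by
      rcases ht.lt_or_eq with h | h
      · exact h
      · exfalso
        have : L = 1 := by rw [hLdef, ← h, add_zero, Real.log_exp]
        linarith
    have hL4 : (4:ℝ) < L := lt_of_le_of_lt hU4 hcase
    have hexp : Real.exp L = Real.exp 1 + t := by
      rw [hLdef, Real.exp_log (by positivity)]
    have hlog2 : Real.log 2 ≤ 1 := by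
      nlinarith [Real.log_le_sub_one_of_pos (by norm_num : (0:ℝ) < 2)]
    have h2e : Real.exp 1 * 2 ≤ Real.exp L := by
      have h' : Real.exp (1 + Real.log 2) ≤ Real.exp L := by
        apply Real.exp_le_exp.mpr; linarith
      rwa [Real.exp_add, Real.exp_log (by norm_num)] at h'
    have htlb : Real.exp L / 2 ≤ t := by
      have := Real.exp_pos 1
      linarith
    have hlogt : L - 1 ≤ Real.log t := by
      have h' : Real.log (Real.exp L / 2) ≤ Real.log t :=
        Real.log_le_log (by positivity) htlb
      rw [Real.log_div (Real.exp_ne_zero L) (by norm_num), Real.log_exp] at h'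
      linarith
    have hsL : Real.sqrt L * Real.sqrt L = L := Real.mul_self_sqrt (by linarith)
    have hsL0 : 0 ≤ Real.sqrt L := Real.sqrt_nonneg L
    have hlogL : Real.log L ≤ 2 * Real.sqrt L := by
      have h1 : Real.log (Real.sqrt L) ≤ Real.sqrt L - 1 :=
        Real.log_le_sub_one_of_pos (Real.sqrt_pos.mpr (by linarith))
      have h2 : Real.log (Real.sqrt L) = Real.log L / 2 := Real.log_sqrt (by linarith)
      linarith
    have hsq : 8 * ν / r ≤ Real.sqrt L := by
      have h1 : Real.sqrt ((8*ν/r)^2) ≤ Real.sqrt L :=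
        Real.sqrt_le_sqrt (le_trans (le_max_right _ _) hcase.le)
      rwa [Real.sqrt_sq (by positivity)] at h1
    have key : r + 2 * ν * Real.sqrt L ≤ r * L / 2 := by
      have h1 : 8 * ν ≤ r * Real.sqrt L := by
        have h := mul_le_mul_of_nonneg_left hsq hr.le
        have : r * (8 * ν / r) = 8 * ν := by field_simp
        linarith
      have h2 : 8 * ν * Real.sqrt L ≤ r * L := by
        calc 8 * ν * Real.sqrt L ≤ (r * Real.sqrt L) * Real.sqrt L :=
              mul_le_mul_of_nonneg_right h1 hsL0
          _ = r * L := by rw [mul_assoc, hsL]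
      have hsL2 : 2 ≤ Real.sqrt L := by
        nlinarith
      nlinarith
    have step : r * L / 2 ≤ Real.log (t ^ r / L ^ ν) := by
      rw [Real.log_div (ne_of_gt (Real.rpow_pos_of_pos ht0 r)) (ne_of_gt hLν),
        Real.log_rpow ht0, Real.log_rpow (by linarith : (0:ℝ) < L)]
      have h1 : r * (L - 1) ≤ r * Real.log t := mul_le_mul_of_nonneg_left hlogt hr.le
      have h2 : ν * Real.log L ≤ ν * (2 * Real.sqrt L) := by
        apply mul_le_mul_of_nonneg_left hlogL (by linarith)
      nlinarith
    have hfin : Real.log (t ^ r / L ^ ν) ≤ Real.log (Real.exp 1 + t ^ r / L ^ ν) := by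
      apply Real.log_le_log (by positivity)
      linarith [Real.exp_pos 1]
    calc min (1/U) (r/2) * L ≤ (r/2) * L :=
          mul_le_mul_of_nonneg_right (min_le_right _ _) (by linarith)
      _ = r * L / 2 := by ring
      _ ≤ _ := le_trans step hfin

set_option maxHeartbeats 2000000 in
theorem stmt0 (p δ : ℝ) (hp : 1 < p) (hδ : 0 < δ) :
    ∃ c C : ℝ, 0 < c ∧ 0 < C ∧ ∀ t : ℝ, 0 ≤ t →
      c * t ^ (p / (p - 1)) / Real.log (Real.exp 1 + t) ^ (1 + δ / (p - 1)) ≤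
          youngConj (fun s => s ^ p * Real.log (Real.exp 1 + s) ^ (p - 1 + δ)) t ∧
        youngConj (fun s => s ^ p * Real.log (Real.exp 1 + s) ^ (p - 1 + δ)) t ≤
          C * t ^ (p / (p - 1)) / Real.log (Real.exp 1 + t) ^ (1 + δ / (p - 1)) := by
  have hp1 : (0:ℝ) < p - 1 := by linarith
  obtain ⟨r, hrdef⟩ : ∃ x : ℝ, x = 1 / (p - 1) := ⟨_, rfl⟩
  have hr : 0 < r := by rw [hrdef]; positivity
  obtain ⟨ν, hνdef⟩ : ∃ x : ℝ, x = 1 + δ / (p - 1) := ⟨_, rfl⟩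
  have hν1 : 1 ≤ ν := by
    rw [hνdef]
    have : 0 < δ / (p - 1) := by positivity
    linarith
  obtain ⟨q, hqdef⟩ : ∃ x : ℝ, x = p - 1 + δ := ⟨_, rfl⟩
  have hq0 : 0 < q := by rw [hqdef]; linarith
  have hqν : ν * (p - 1) = q := by rw [hνdef, hqdef]; field_simp
  have hr1 : r * (p - 1) = 1 := by rw [hrdef]; field_simp
  have hpr : p / (p - 1) = r + 1 := by rw [hrdef]; field_simp; ring
  have hpr0 : p / (p - 1) ≠ 0 := ne_of_gt (div_pos (by linarith) hp1)
  obtain ⟨c₁, hc₁0, hc₁1, hcrux1⟩ := crux1 r ν hr hν1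
  obtain ⟨C₂, hC₂1, hcrux2⟩ := crux2 r hr
  obtain ⟨K, hKdef⟩ : ∃ x : ℝ, x = (1/c₁) ^ (q / (p-1)) := ⟨_, rfl⟩
  have hc₁inv : 1 ≤ 1/c₁ := by rw [le_div_iff₀ hc₁0]; linarith
  have hK0 : 0 < K := by
    rw [hKdef]; exact Real.rpow_pos_of_pos (by linarith) _
  have hK1 : 1 ≤ K := by
    rw [hKdef]; exact Real.one_le_rpow hc₁inv (le_of_lt (div_pos hq0 hp1))
  have hKpow : K ^ (p-1) * c₁ ^ q = 1 := by
    rw [hKdef, ← Real.rpow_mul (by linarith), div_mul_cancel₀ _ (ne_of_gt hp1),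
      ← Real.mul_rpow (by linarith) hc₁0.le, one_div_mul_cancel (ne_of_gt hc₁0),
      Real.one_rpow]
  have hC₂q1 : (1:ℝ) ≤ C₂ ^ q := Real.one_le_rpow hC₂1 hq0.le
  obtain ⟨k, hkdef⟩ : ∃ x : ℝ, x = (1/(2 * C₂ ^ q)) ^ r := ⟨_, rfl⟩
  have hk0 : 0 < k := by
    rw [hkdef]
    exact Real.rpow_pos_of_pos (one_div_pos.mpr (by linarith)) _
  have hk1 : k ≤ 1 := by
    rw [hkdef]
    exact Real.rpow_le_one (by positivity)
      (by rw [div_le_one (by linarith)]; linarith) hr.le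
  have hkpow : k ^ (p-1) * (2 * C₂ ^ q) = 1 := by
    rw [hkdef, ← Real.rpow_mul (by positivity), hr1, Real.rpow_one,
      one_div_mul_cancel (by positivity)]
  refine ⟨k/2, K, by linarith, by linarith, ?_⟩
  intro t ht
  rw [← hqdef, ← hνdef]
  obtain ⟨L, hLdef⟩ : ∃ x : ℝ, x = Real.log (Real.exp 1 + t) := ⟨_, rfl⟩
  rw [← hLdef]
  have hL1 : 1 ≤ L := by rw [hLdef]; exact one_le_LL ht
  have hLpos : 0 < L := by linarith
  have hLq : (0:ℝ) < L ^ q := Real.rpow_pos_of_pos hLpos q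
  have hLν : (0:ℝ) < L ^ ν := Real.rpow_pos_of_pos hLpos ν
  obtain ⟨σ, hσdef⟩ : ∃ x : ℝ, x = t ^ r / L ^ ν := ⟨_, rfl⟩
  have hσ0 : 0 ≤ σ := by
    rw [hσdef]
    exact div_nonneg (Real.rpow_nonneg ht r) hLν.le
  have hA : ∀ s : ℝ, 0 < s → s ^ p * Real.log (Real.exp 1 + s) ^ q
      = s * (s ^ (p-1) * Real.log (Real.exp 1 + s) ^ q) := by
    intro s hs
    have h1 : s ^ p = s ^ (1:ℝ) * s ^ (p-1) := by
      rw [← Real.rpow_add hs]; ring_nf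
    rw [h1, Real.rpow_one, mul_assoc]
  have hσpow : σ ^ (p-1) = t / L ^ q := by
    rw [hσdef, Real.div_rpow (Real.rpow_nonneg ht r) (Real.rpow_nonneg hLpos.le ν),
      ← Real.rpow_mul ht, hr1, Real.rpow_one, ← Real.rpow_mul hLpos.le, hqν]
  have hσt : σ * t = t ^ (p/(p-1)) / L ^ ν := by
    rcases ht.lt_or_eq with ht0 | ht0
    · rw [hpr, Real.rpow_add ht0, Real.rpow_one, hσdef]; ring
    · rw [← ht0, Real.zero_rpow hpr0]
      rw [hσdef, ← ht0, Real.zero_rpow (ne_of_gt hr)]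
      simp
  -- pointwise upper bound on the defining set
  have Hub : ∀ x ∈ {x : ℝ | ∃ s : ℝ, 0 < s ∧
      x = s * t - (fun s => s ^ p * Real.log (Real.exp 1 + s) ^ q) s},
      x ≤ K * t ^ (p/(p-1)) / L ^ ν := by
    rintro x ⟨s, hs, rfl⟩
    simp only
    have hLs1 : 1 ≤ Real.log (Real.exp 1 + s) := one_le_LL hs.le
    have hAs0 : 0 ≤ s ^ p * Real.log (Real.exp 1 + s) ^ q :=
      mul_nonneg (Real.rpow_nonneg hs.le p) (Real.rpow_nonneg (by linarith) q)
    have hGpos : 0 ≤ K * t ^ (p/(p-1)) / L ^ ν :=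
      div_nonneg (mul_nonneg hK0.le (Real.rpow_nonneg ht _)) hLν.le
    rcases le_or_gt s (K * σ) with hcase | hcase
    · have h1 : s * t ≤ K * σ * t := mul_le_mul_of_nonneg_right hcase ht
      have h2 : K * σ * t = K * t ^ (p/(p-1)) / L ^ ν := by
        rw [mul_assoc, hσt]; ring
      linarith
    · -- here A s ≥ s * t
      have hKσ0 : 0 ≤ K * σ := mul_nonneg hK0.le hσ0
      have hmono1 : (K*σ)^(p-1) ≤ s^(p-1) := Real.rpow_le_rpow hKσ0 hcase.le (by linarith)
      have hLKσ1 : 1 ≤ Real.log (Real.exp 1 + K*σ) := one_le_LL hKσ0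
      have hmono2 : (Real.log (Real.exp 1 + K*σ))^q ≤ (Real.log (Real.exp 1 + s))^q :=
        Real.rpow_le_rpow (by linarith)
          (Real.log_le_log (by linarith [Real.exp_pos 1]) (by linarith)) hq0.le
      have hσKσ : σ ≤ K * σ := le_mul_of_one_le_left hσ0 hK1
      have hc₁L : c₁ * L ≤ Real.log (Real.exp 1 + K*σ) := by
        have h0 := hcrux1 t ht
        rw [← hLdef, ← hσdef] at h0
        refine le_trans h0 ?_
        exact Real.log_le_log (by linarith [Real.exp_pos 1]) (by linarith)
      have hKσpow : (K*σ)^(p-1) = K^(p-1) * (t / L^q) := by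
        rw [Real.mul_rpow hK0.le hσ0, hσpow]
      have hstep : t ≤ (K*σ)^(p-1) * (Real.log (Real.exp 1 + K*σ))^q := by
        have h2 : (c₁*L)^q ≤ (Real.log (Real.exp 1 + K*σ))^q :=
          Real.rpow_le_rpow (mul_nonneg hc₁0.le hLpos.le) hc₁L hq0.le
        have h3 : (c₁*L)^q = c₁^q * L^q := Real.mul_rpow hc₁0.le hLpos.le
        have h4 : 0 ≤ K^(p-1) * (t/L^q) :=
          mul_nonneg (Real.rpow_nonneg hK0.le _) (div_nonneg ht hLq.le)
        calc t = (K^(p-1) * c₁^q) * t := by rw [hKpow]; ring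
          _ = (K^(p-1) * (t/L^q)) * (c₁^q * L^q) := by
              have h5 : (K^(p-1) * (t/L^q)) * (c₁^q * L^q)
                  = (K^(p-1) * c₁^q) * t * (L^q / L^q) := by ring
              rw [h5, div_self (ne_of_gt hLq), mul_one]
          _ ≤ (K^(p-1) * (t/L^q)) * (Real.log (Real.exp 1 + K*σ))^q := by
              refine mul_le_mul_of_nonneg_left ?_ h4
              rw [← h3]; exact h2
          _ = (K*σ)^(p-1) * (Real.log (Real.exp 1 + K*σ))^q := by rw [hKσpow]
      have hfinal : t ≤ s^(p-1) * (Real.log (Real.exp 1 + s))^q := by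
        refine le_trans hstep ?_
        exact mul_le_mul hmono1 hmono2 (Real.rpow_nonneg (by linarith) q)
          (Real.rpow_nonneg hs.le _)
      have hst : s * t ≤ s ^ p * Real.log (Real.exp 1 + s) ^ q := by
        rw [hA s hs]
        exact mul_le_mul_of_nonneg_left hfinal hs.le
      linarith
  have hne : {x : ℝ | ∃ s : ℝ, 0 < s ∧
      x = s * t - (fun s => s ^ p * Real.log (Real.exp 1 + s) ^ q) s}.Nonempty :=
    ⟨1 * t - (fun s => s ^ p * Real.log (Real.exp 1 + s) ^ q) 1, 1, one_pos, rfl⟩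
  have hbdd : BddAbove {x : ℝ | ∃ s : ℝ, 0 < s ∧
      x = s * t - (fun s => s ^ p * Real.log (Real.exp 1 + s) ^ q) s} :=
    ⟨K * t ^ (p/(p-1)) / L ^ ν, Hub⟩
  constructor
  · -- lower bound
    rw [youngConj]
    rcases ht.lt_or_eq with ht0 | ht0
    · -- t > 0
      have hσpos : 0 < σ := by
        rw [hσdef]
        exact div_pos (Real.rpow_pos_of_pos ht0 r) hLν
      obtain ⟨s₁, hs₁def⟩ : ∃ x : ℝ, x = k * σ := ⟨_, rfl⟩
      have hs₁ : 0 < s₁ := by rw [hs₁def]; exact mul_pos hk0 hσpos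
      have hs₁σ : s₁ ≤ σ := by
        rw [hs₁def]
        calc k * σ ≤ 1 * σ := mul_le_mul_of_nonneg_right hk1 hσpos.le
          _ = σ := one_mul σ
      have hs₁tr : s₁ ≤ t ^ r := by
        refine le_trans hs₁σ ?_
        rw [hσdef]
        exact div_le_self (Real.rpow_nonneg ht r) (Real.one_le_rpow hL1 (by linarith))
      have hLs₁ : Real.log (Real.exp 1 + s₁) ≤ C₂ * L := by
        have h0 := hcrux2 t ht s₁ hs₁.le hs₁tr
        rwa [← hLdef] at h0
      have hs₁pow : s₁ ^ (p-1) = k^(p-1) * (t / L^q) := by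
        rw [hs₁def, Real.mul_rpow hk0.le hσ0, hσpow]
      have h2 : (Real.log (Real.exp 1 + s₁))^q ≤ C₂^q * L^q := by
        calc (Real.log (Real.exp 1 + s₁))^q ≤ (C₂ * L)^q :=
              Real.rpow_le_rpow (by linarith [one_le_LL hs₁.le]) hLs₁ hq0.le
          _ = C₂^q * L^q := Real.mul_rpow (by linarith) hLpos.le
      have hAs₁ : s₁^p * (Real.log (Real.exp 1 + s₁))^q ≤ s₁ * (t/2) := by
        rw [hA s₁ hs₁]
        refine mul_le_mul_of_nonneg_left ?_ hs₁.le
        calc s₁^(p-1) * (Real.log (Real.exp 1 + s₁))^q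
            ≤ (k^(p-1) * (t/L^q)) * (C₂^q * L^q) := by
              rw [hs₁pow]
              refine mul_le_mul_of_nonneg_left h2 ?_
              exact mul_nonneg (Real.rpow_nonneg hk0.le _) (div_nonneg ht hLq.le)
          _ = (k^(p-1) * (2 * C₂^q)) * (t/2) * (L^q / L^q) := by ring
          _ = t/2 := by rw [hkpow, div_self (ne_of_gt hLq)]; ring
      have hmem : s₁ * t - (fun s => s ^ p * Real.log (Real.exp 1 + s) ^ q) s₁ ∈
          {x : ℝ | ∃ s : ℝ, 0 < s ∧
            x = s * t - (fun s => s ^ p * Real.log (Real.exp 1 + s) ^ q) s} :=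
        ⟨s₁, hs₁, rfl⟩
      have hcs := le_csSup hbdd hmem
      have hval : k/2 * t ^ (p/(p-1)) / L ^ ν ≤
          s₁ * t - (fun s => s ^ p * Real.log (Real.exp 1 + s) ^ q) s₁ := by
        simp only
        have h5 : s₁ * (t/2) = k/2 * t ^ (p/(p-1)) / L ^ ν := by
          rw [hs₁def]
          have h6 : k * σ * (t/2) = k/2 * (σ * t) := by ring
          rw [h6, hσt]; ring
        linarith
      exact le_trans hval hcs
    · -- t = 0
      rw [← ht0, Real.zero_rpow hpr0]
      rw [mul_zero, zero_div]
      apply le_of_forall_pos_le_add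
      intro ε hε
      have h2q : (0:ℝ) < 2^q := Real.rpow_pos_of_pos two_pos q
      obtain ⟨s, hsdef⟩ : ∃ x : ℝ, x = min 1 (ε / 2^q) := ⟨_, rfl⟩
      have hs0 : 0 < s := by
        rw [hsdef]
        exact lt_min one_pos (div_pos hε h2q)
      have hs1 : s ≤ 1 := by rw [hsdef]; exact min_le_left _ _
      have he2 : (2:ℝ) ≤ Real.exp 1 := by linarith [Real.add_one_le_exp (1:ℝ)]
      have hLs : Real.log (Real.exp 1 + s) ≤ 2 := by
        have h' : Real.log (Real.exp 1 + s) ≤ Real.log (Real.exp 1 * Real.exp 1) := by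
          apply Real.log_le_log (by linarith)
          nlinarith
        rw [Real.log_mul (Real.exp_ne_zero 1) (Real.exp_ne_zero 1), Real.log_exp] at h'
        linarith
      have hA_small : s^p * (Real.log (Real.exp 1 + s))^q ≤ ε := by
        have h1 : (Real.log (Real.exp 1 + s))^q ≤ 2^q :=
          Real.rpow_le_rpow (by linarith [one_le_LL hs0.le]) hLs hq0.le
        have h2 : s^p ≤ s := by
          calc s^p ≤ s^(1:ℝ) := Real.rpow_le_rpow_of_exponent_ge hs0 hs1 (by linarith)
            _ = s := Real.rpow_one s
        calc s^p * (Real.log (Real.exp 1 + s))^q ≤ s * 2^q := by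
              refine mul_le_mul h2 h1
                (Real.rpow_nonneg (by linarith [one_le_LL hs0.le]) q) hs0.le
          _ ≤ (ε/2^q) * 2^q := by
              refine mul_le_mul_of_nonneg_right ?_ h2q.le
              rw [hsdef]; exact min_le_right _ _
          _ = ε := by field_simp
      have hmem : s * t - (fun s => s ^ p * Real.log (Real.exp 1 + s) ^ q) s ∈
          {x : ℝ | ∃ s : ℝ, 0 < s ∧
            x = s * t - (fun s => s ^ p * Real.log (Real.exp 1 + s) ^ q) s} :=
        ⟨s, hs0, rfl⟩
      have hcs := le_csSup hbdd hmem
      simp only at hcs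
      rw [← ht0, mul_zero] at hcs
      linarith
  · -- upper bound
    rw [youngConj]
    exact csSup_le hne Hub
end

section
/- Let 1<p<∞, p'=p/(p-1), δ>0, B(t)=t^{p'}log(e+t)^{p'-1+δ} and B_0(t)=t^{p'}log(e+t)^{p'-1+δ/2}. Set γ = δ/(2(p'-1+δ)) and C(t) = B(t^{1/(1-γ)}). Then there is a constant κ>0 (depending on p, δ) such that C^{-1}(t)·t^{γ/p'} ≤ κ·B_0^{-1}(t) for all t ≥ 1. -/
set_option maxHeartbeats 1000000
open Real

lemma half_log (s : ℝ) (hs : 0 ≤ s) :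
    Real.log (Real.exp 1 + s) ≤ 2 * Real.log (Real.exp 1 + s ^ (1/2 : ℝ)) := by
  set x := s ^ (1/2 : ℝ) with hx
  have hx0 : 0 ≤ x := Real.rpow_nonneg hs _
  have hxx : x ^ (2:ℕ) = s := by
    rw [hx, ← Real.rpow_natCast (s ^ (1/2:ℝ)) 2, ← Real.rpow_mul hs]
    norm_num
  have he : (1:ℝ) ≤ Real.exp 1 := by
    have := Real.add_one_le_exp (1:ℝ); linarith
  have hkey : Real.exp 1 + s ≤ (Real.exp 1 + x) ^ (2:ℕ) := by
    nlinarith [sq_nonneg x, hxx]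
  calc Real.log (Real.exp 1 + s) ≤ Real.log ((Real.exp 1 + x) ^ (2:ℕ)) := by
        apply Real.log_le_log (by positivity) hkey
    _ = 2 * Real.log (Real.exp 1 + x) := by
        rw [Real.log_pow]; norm_num

lemma log_pow_le (a s0 : ℝ) (ha : 0 < a) (hs0 : 0 < s0) :
    ∃ K ≥ 1, ∀ s, s0 ≤ s → Real.log (Real.exp 1 + s) ^ a ≤ K * s ^ (1/2 : ℝ) := by
  have hc1 : (1:ℝ) ≤ Real.exp 1 / s0 + 1 := by
    have : 0 < Real.exp 1 / s0 := by positivity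
    linarith
  set c : ℝ := Real.exp 1 / s0 + 1 with hc
  set K : ℝ := (2*a) ^ a * c ^ (1/2 : ℝ) with hK
  refine ⟨max K 1, le_max_right _ _, fun s hs => ?_⟩
  have hspos : 0 < s := lt_of_lt_of_le hs0 hs
  have hL0 : 0 ≤ Real.log (Real.exp 1 + s) := by
    apply Real.log_nonneg
    have := Real.add_one_le_exp (1:ℝ); linarith
  have hε : 0 < 1/(2*a) := by positivity
  have hcs : Real.exp 1 + s ≤ c * s := by
    have h0 : Real.exp 1 ≤ (Real.exp 1 / s0) * s := by
      rw [div_mul_eq_mul_div, le_div_iff₀ hs0]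
      nlinarith [Real.exp_pos (1:ℝ)]
    rw [hc]; nlinarith
  have h1 : Real.log (Real.exp 1 + s) ≤ (2*a) * (c * s) ^ (1/(2*a) : ℝ) := by
    have hl := Real.log_le_rpow_div (x := Real.exp 1 + s) (by positivity) hε
    have h2 : (Real.exp 1 + s) ^ (1/(2*a):ℝ) ≤ (c * s) ^ (1/(2*a):ℝ) :=
      Real.rpow_le_rpow (by positivity) hcs hε.le
    calc Real.log (Real.exp 1 + s) ≤ (Real.exp 1 + s) ^ (1/(2*a):ℝ) / (1/(2*a)) := hl
      _ = (2*a) * (Real.exp 1 + s) ^ (1/(2*a):ℝ) := by field_simp; try ring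
      _ ≤ (2*a) * (c * s) ^ (1/(2*a):ℝ) := by nlinarith
  have h3 : Real.log (Real.exp 1 + s) ^ a ≤ ((2*a) * (c*s) ^ (1/(2*a):ℝ)) ^ a :=
    Real.rpow_le_rpow hL0 h1 ha.le
  have hcpos : 0 < c := lt_of_lt_of_le one_pos hc1
  have h4 : ((2*a) * (c*s) ^ (1/(2*a):ℝ)) ^ a = K * s ^ (1/2 : ℝ) := by
    have hea : (1/(2*a)) * a = 1/2 := by field_simp; try ring
    rw [Real.mul_rpow (by positivity) (by positivity),
        ← Real.rpow_mul (by positivity), hea,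
        Real.mul_rpow hcpos.le hspos.le, hK, mul_assoc]
  rw [h4] at h3
  calc Real.log (Real.exp 1 + s) ^ a ≤ K * s ^ (1/2:ℝ) := h3
    _ ≤ max K 1 * s ^ (1/2:ℝ) := by
        have : (0:ℝ) ≤ s ^ (1/2:ℝ) := Real.rpow_nonneg hspos.le _
        nlinarith [le_max_left K 1]


lemma core (q δ γ a K t s : ℝ)
    (hq : 1 < q) (hδ : 0 < δ) (hγ0 : 0 < γ) (hγ1 : γ < 1)
    (hγβ : (1-γ) * (q-1+δ) = q-1+δ/2)
    (ha : a = γ*(q-1+δ/2)/(q*(1-γ)))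
    (hK1 : 1 ≤ K)
    (hKs : Real.log (Real.exp 1 + s) ^ a ≤ K * s ^ (1/2:ℝ))
    (ht : 1 ≤ t) (hs : 0 < s)
    (hts : t ≤ s ^ q * Real.log (Real.exp 1 + s) ^ (q-1+δ/2)) :
    t ≤ (((K * 2 ^ ((q-1+δ)/q)) ^ (1-γ) * s * t ^ (-(γ/q))) ^ (1/(1-γ))) ^ q *
        Real.log (Real.exp 1 + ((K * 2 ^ ((q-1+δ)/q)) ^ (1-γ) * s * t ^ (-(γ/q))) ^ (1/(1-γ))) ^ (q-1+δ) := by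
  have hq0 : 0 < q := by linarith
  have h1γ : 0 < 1 - γ := by linarith
  have ht0 : 0 < t := by linarith
  have hβ : 0 < q - 1 + δ/2 := by linarith
  have hβ' : 0 < q - 1 + δ := by linarith
  have hK0 : 0 < K := lt_of_lt_of_le one_pos hK1
  have hL1 : 1 ≤ Real.log (Real.exp 1 + s) := by
    rw [Real.le_log_iff_exp_le (by positivity)]
    linarith
  have hL0 : (0:ℝ) < Real.log (Real.exp 1 + s) := by linarith
  set L := Real.log (Real.exp 1 + s) with hLdef
  set b : ℝ := (q-1+δ)/q with hbdef
  have hb0 : 0 < b := by positivity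
  have h2b : (1:ℝ) ≤ 2 ^ b := Real.one_le_rpow one_le_two hb0.le
  have h2b0 : (0:ℝ) < 2 ^ b := by positivity
  set κ : ℝ := (K * 2 ^ b) ^ (1-γ) with hκdef
  have hKb0 : (0:ℝ) < K * 2 ^ b := by positivity
  have hκ0 : 0 < κ := Real.rpow_pos_of_pos hKb0 _
  set e1 : ℝ := 1/(1-γ) with he1def
  have he10 : 0 < e1 := by positivity
  set u : ℝ := κ * s * t ^ (-(γ/q)) with hudef
  have hu0 : 0 < u := by
    have := Real.rpow_pos_of_pos ht0 (-(γ/q)); positivity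
  set w : ℝ := u ^ e1 with hwdef
  have hw0 : 0 < w := Real.rpow_pos_of_pos hu0 _
  set c2 : ℝ := γ/(q*(1-γ)) with hc2def
  -- κ ^ e1 = K * 2^b
  have hκe1 : κ ^ e1 = K * 2 ^ b := by
    rw [hκdef, ← Real.rpow_mul hKb0.le, show (1-γ)*e1 = 1 by rw [he1def]; field_simp; try ring,
      Real.rpow_one]
  -- w expression
  have hwe : w = (κ*s) ^ e1 * t ^ (-c2) := by
    rw [hwdef, hudef, Real.mul_rpow (by positivity) (by positivity),
      ← Real.rpow_mul ht0.le, show -(γ/q)*e1 = -c2 by rw [he1def, hc2def]; field_simp; try ring]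
  -- t^(-c2) lower bound
  have hts' : (s^q * L^(q-1+δ/2)) ^ (-c2) ≤ t ^ (-c2) := by
    apply Real.rpow_le_rpow_of_nonpos ht0 hts
    rw [hc2def]; rw [neg_nonpos]; positivity
  have hsplit : (s^q * L^(q-1+δ/2)) ^ (-c2) = s^(q*(-c2)) * L^((q-1+δ/2)*(-c2)) := by
    rw [Real.mul_rpow (by positivity) (by positivity), ← Real.rpow_mul hs.le,
      ← Real.rpow_mul hL0.le]
  have hqc2 : q*(-c2) = -(γ/(1-γ)) := by rw [hc2def]; field_simp; try ring
  have hβc2 : (q-1+δ/2)*(-c2) = -a := by rw [hc2def, ha]; field_simp; try ring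
  -- w ≥ (K*2^b) * s * L^(-a)
  have hse : s ^ e1 * s ^ (-(γ/(1-γ))) = s := by
    rw [← Real.rpow_add hs, show e1 + -(γ/(1-γ)) = 1 by rw [he1def]; field_simp; try ring, Real.rpow_one]
  have hwge : (K * 2^b) * s * L^(-a) ≤ w := by
    rw [hwe, Real.mul_rpow hκ0.le hs.le, hκe1]
    calc (K * 2^b) * s * L^(-a)
        = (K*2^b) * s^e1 * (s^(q*(-c2)) * L^((q-1+δ/2)*(-c2))) := by
          rw [hqc2, hβc2]
          calc (K * 2^b) * s * L^(-a)
              = (K*2^b) * (s^e1 * s^(-(γ/(1-γ)))) * L^(-a) := by rw [hse]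
            _ = (K*2^b) * s^e1 * (s^(-(γ/(1-γ))) * L^(-a)) := by ring
      _ = (K*2^b) * s^e1 * ((s^q * L^(q-1+δ/2)) ^ (-c2)) := by rw [hsplit]
      _ ≤ (K*2^b) * s^e1 * t^(-c2) := by
          apply mul_le_mul_of_nonneg_left hts'
          positivity
  -- s^(1/2) ≤ K*s*L^(-a)
  have hLapos : (0:ℝ) < L^a := Real.rpow_pos_of_pos hL0 _
  have hssplit : s = s^(1/2:ℝ) * s^(1/2:ℝ) := by
    rw [← Real.rpow_add hs]; norm_num
  have hkey : s^(1/2:ℝ) ≤ K * s * L^(-a) := by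
    rw [Real.rpow_neg hL0.le, ← div_eq_mul_inv, le_div_iff₀ hLapos]
    calc s^(1/2:ℝ) * L^a ≤ s^(1/2:ℝ) * (K * s^(1/2:ℝ)) := by
          apply mul_le_mul_of_nonneg_left hKs (Real.rpow_nonneg hs.le _)
      _ = K * (s^(1/2:ℝ) * s^(1/2:ℝ)) := by ring
      _ = K * s := by rw [← hssplit]
  have hwlow : s^(1/2:ℝ) ≤ w := by
    refine le_trans hkey (le_trans ?_ hwge)
    have hLa0 : (0:ℝ) < L^(-a) := Real.rpow_pos_of_pos hL0 _
    nlinarith [mul_nonneg (by linarith : (0:ℝ) ≤ 2^b - 1) (le_of_lt (mul_pos (mul_pos hK0 hs) hLa0))]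
  -- M := log(e + w)
  set M := Real.log (Real.exp 1 + w) with hMdef
  have hM1 : 1 ≤ M := by
    rw [hMdef, Real.le_log_iff_exp_le (by positivity)]
    linarith
  have hM0 : (0:ℝ) < M := by linarith
  have h2M : L ≤ 2 * M := by
    calc L ≤ 2 * Real.log (Real.exp 1 + s^(1/2:ℝ)) := half_log s hs.le
      _ ≤ 2 * M := by
          have := Real.log_le_log (x := Real.exp 1 + s^(1/2:ℝ)) (by positivity)
            (by linarith : Real.exp 1 + s^(1/2:ℝ) ≤ Real.exp 1 + w)
          linarith
  -- exponent identities
  have hβe1 : (q-1+δ/2)*e1 = q-1+δ := by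
    rw [← hγβ, he1def]; field_simp; try ring
  -- t^e1 bound
  have hte1 : t ^ e1 ≤ s^(e1*q) * L^(q-1+δ) := by
    calc t^e1 ≤ (s^q * L^(q-1+δ/2))^e1 := Real.rpow_le_rpow ht0.le hts he10.le
      _ = s^(q*e1) * L^((q-1+δ/2)*e1) := by
          rw [Real.mul_rpow (by positivity) (by positivity), ← Real.rpow_mul hs.le,
            ← Real.rpow_mul hL0.le]
      _ = s^(e1*q) * L^(q-1+δ) := by rw [hβe1, mul_comm q e1]
  -- w^q expression
  have hwq : w^q = K^q * 2^(q-1+δ) * s^(e1*q) * t^(-(γ/(1-γ))) := by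
    have h1 : w^q = (κ*s)^(e1*q) * t^(-c2*q) := by
      rw [hwe, Real.mul_rpow (by positivity) (by positivity),
        ← Real.rpow_mul (by positivity), ← Real.rpow_mul ht0.le]
    have h2 : (κ*s)^(e1*q) = κ^(e1*q) * s^(e1*q) := Real.mul_rpow hκ0.le hs.le
    have h3 : κ^(e1*q) = K^q * 2^(q-1+δ) := by
      rw [hκdef, ← Real.rpow_mul hKb0.le, show (1-γ)*(e1*q) = q by rw [he1def]; field_simp; try ring,
        Real.mul_rpow hK0.le h2b0.le, ← Real.rpow_mul (by norm_num : (0:ℝ) ≤ 2),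
        show b*q = q-1+δ by rw [hbdef]; field_simp; try ring]
    have h4 : -c2*q = -(γ/(1-γ)) := by rw [hc2def]; field_simp; try ring
    rw [h1, h2, h3, h4]
  have hKq1 : (1:ℝ) ≤ K^q := Real.one_le_rpow hK1 hq0.le
  have hLM : L ^ (q-1+δ) ≤ 2^(q-1+δ) * M^(q-1+δ) := by
    calc L^(q-1+δ) ≤ (2*M)^(q-1+δ) := Real.rpow_le_rpow hL0.le h2M hβ'.le
      _ = 2^(q-1+δ) * M^(q-1+δ) := Real.mul_rpow (by norm_num) hM0.le
  have htsplit : t = t^e1 * t^(-(γ/(1-γ))) := by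
    rw [← Real.rpow_add ht0, show e1 + -(γ/(1-γ)) = 1 by rw [he1def]; field_simp; try ring, Real.rpow_one]
  -- final assembly
  have hT0 : (0:ℝ) < t^(-(γ/(1-γ))) := Real.rpow_pos_of_pos ht0 _
  have hA0 : (0:ℝ) < s^(e1*q) := Real.rpow_pos_of_pos hs _
  have h2β0 : (0:ℝ) < 2^(q-1+δ) := by positivity
  have hMβ0 : (0:ℝ) < M^(q-1+δ) := Real.rpow_pos_of_pos hM0 _
  have hLβ0 : (0:ℝ) < L^(q-1+δ) := Real.rpow_pos_of_pos hL0 _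
  calc t = t^e1 * t^(-(γ/(1-γ))) := htsplit
    _ ≤ (s^(e1*q) * L^(q-1+δ)) * t^(-(γ/(1-γ))) := by
        apply mul_le_mul_of_nonneg_right hte1 hT0.le
    _ ≤ (s^(e1*q) * (2^(q-1+δ) * M^(q-1+δ))) * t^(-(γ/(1-γ))) := by
        apply mul_le_mul_of_nonneg_right _ hT0.le
        exact mul_le_mul_of_nonneg_left hLM hA0.le
    _ ≤ K^q * (s^(e1*q) * (2^(q-1+δ) * M^(q-1+δ)) * t^(-(γ/(1-γ)))) := by
        apply le_mul_of_one_le_left _ hKq1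
        positivity
    _ = (K^q * 2^(q-1+δ) * s^(e1*q) * t^(-(γ/(1-γ)))) * M^(q-1+δ) := by ring
    _ = w^q * M^(q-1+δ) := by rw [hwq]

lemma s_lower (q β s : ℝ) (hq : 0 < q) (hβ : 0 < β) (hs : 0 ≤ s)
    (h : 1 ≤ s ^ q * Real.log (Real.exp 1 + s) ^ β) : (2:ℝ) ^ (-(β/q)) ≤ s := by
  rcases le_or_gt 1 s with h1 | h1
  · refine le_trans ?_ h1
    apply Real.rpow_le_one_of_one_le_of_nonpos one_le_two
    rw [neg_nonpos]; positivity
  · have he2 : (2:ℝ) ≤ Real.exp 1 := by nlinarith [Real.add_one_le_exp (1:ℝ)]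
    have hL2 : Real.log (Real.exp 1 + s) ≤ 2 := by
      have hle : Real.exp 1 + s ≤ Real.exp 2 := by
        rw [show (2:ℝ) = 1 + 1 by norm_num, Real.exp_add]
        nlinarith [Real.exp_pos (1:ℝ)]
      calc Real.log (Real.exp 1 + s) ≤ Real.log (Real.exp 2) :=
            Real.log_le_log (by positivity) hle
        _ = 2 := Real.log_exp 2
    have hL0 : 0 ≤ Real.log (Real.exp 1 + s) := by
      apply Real.log_nonneg; nlinarith
    have hLβ : Real.log (Real.exp 1 + s) ^ β ≤ 2 ^ β := Real.rpow_le_rpow hL0 hL2 hβ.le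
    have hsq0 : 0 ≤ s ^ q := Real.rpow_nonneg hs q
    have hmul : 1 ≤ s ^ q * 2 ^ β :=
      le_trans h (mul_le_mul_of_nonneg_left hLβ hsq0)
    have hprod : (2:ℝ)^(-β) * 2^β = 1 := by
      rw [← Real.rpow_add two_pos, neg_add_cancel, Real.rpow_zero]
    have h2βn : (0:ℝ) < 2^(-β) := Real.rpow_pos_of_pos two_pos _
    have hsq : (2:ℝ)^(-β) ≤ s ^ q := by
      nlinarith [mul_le_mul_of_nonneg_right hmul h2βn.le]
    have := Real.rpow_le_rpow h2βn.le hsq (by positivity : (0:ℝ) ≤ 1/q)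
    rw [← Real.rpow_mul (by norm_num : (0:ℝ) ≤ 2), ← Real.rpow_mul hs,
      show -β*(1/q) = -(β/q) by ring, show q*(1/q) = 1 by field_simp, Real.rpow_one] at this
    exact this

/-- The generalized inverse of an increasing function `Φ`. -/
noncomputable def genInv (Φ : ℝ → ℝ) (t : ℝ) : ℝ :=
  sInf {s : ℝ | 0 ≤ s ∧ t ≤ Φ s}

theorem stmt8 (p δ p' γ : ℝ) (hp : 1 < p) (hδ : 0 < δ)
    (hp' : p' = p / (p - 1)) (hγ : γ = δ / (2 * (p' - 1 + δ))) :
    ∃ κ : ℝ, 0 < κ ∧ ∀ t ≥ (1 : ℝ),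
      genInv (fun s : ℝ =>
          (s ^ (1 / (1 - γ))) ^ p' *
            Real.log (Real.exp 1 + s ^ (1 / (1 - γ))) ^ (p' - 1 + δ)) t * t ^ (γ / p') ≤
        κ * genInv (fun s : ℝ =>
          s ^ p' * Real.log (Real.exp 1 + s) ^ (p' - 1 + δ / 2)) t := by
  have hq : 1 < p' := by
    rw [hp', lt_div_iff₀ (by linarith : (0:ℝ) < p - 1)]; linarith
  have hβ'pos : 0 < p' - 1 + δ := by linarith
  have hβpos : 0 < p' - 1 + δ/2 := by linarith
  have hγ0 : 0 < γ := by rw [hγ]; positivity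
  have hγ1 : γ < 1 := by
    rw [hγ, div_lt_one (by linarith : (0:ℝ) < 2*(p'-1+δ))]; linarith
  have h1γ : 0 < 1 - γ := by linarith
  have hγβ : (1-γ)*(p'-1+δ) = p'-1+δ/2 := by
    rw [hγ]; field_simp; ring
  have ha0 : 0 < γ*(p'-1+δ/2)/(p'*(1-γ)) :=
    div_pos (mul_pos hγ0 hβpos) (mul_pos (by linarith) h1γ)
  have hs00 : (0:ℝ) < 2^(-((p'-1+δ/2)/p')) := Real.rpow_pos_of_pos two_pos _
  obtain ⟨K, hK1, hKle⟩ := log_pow_le (γ*(p'-1+δ/2)/(p'*(1-γ))) (2^(-((p'-1+δ/2)/p')))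
    ha0 hs00
  have hK0 : (0:ℝ) < K := by linarith
  have h2b0 : (0:ℝ) < 2^((p'-1+δ)/p') := Real.rpow_pos_of_pos two_pos _
  have hKb0 : (0:ℝ) < K * 2^((p'-1+δ)/p') := by positivity
  have hκ0 : (0:ℝ) < (K * 2^((p'-1+δ)/p'))^(1-γ) := Real.rpow_pos_of_pos hKb0 _
  refine ⟨(K * 2^((p'-1+δ)/p'))^(1-γ), hκ0, fun t ht => ?_⟩
  have ht0 : (0:ℝ) < t := by linarith
  simp only [genInv]
  set κ := (K * 2^((p'-1+δ)/p'))^(1-γ) with hκdef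
  set SC : Set ℝ := {s : ℝ | 0 ≤ s ∧ t ≤ (s ^ (1 / (1 - γ))) ^ p' *
      Real.log (Real.exp 1 + s ^ (1 / (1 - γ))) ^ (p' - 1 + δ)} with hSCdef
  set S0 : Set ℝ := {s : ℝ | 0 ≤ s ∧ t ≤ s ^ p' *
      Real.log (Real.exp 1 + s) ^ (p' - 1 + δ / 2)} with hS0def
  have hSC_bdd : BddBelow SC := ⟨0, fun x hx => hx.1⟩
  have hS0_ne : S0.Nonempty := by
    refine ⟨t, ht0.le, ?_⟩
    have h1 : t ≤ t ^ p' := by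
      nth_rewrite 1 [show t = t^(1:ℝ) by rw [Real.rpow_one]]
      exact Real.rpow_le_rpow_of_exponent_le ht (by linarith)
    have h2 : (1:ℝ) ≤ Real.log (Real.exp 1 + t) ^ (p'-1+δ/2) := by
      apply Real.one_le_rpow _ hβpos.le
      rw [Real.le_log_iff_exp_le (by positivity)]; linarith
    nlinarith [Real.rpow_nonneg ht0.le p']
  have key : ∀ s ∈ S0, sInf SC * t^(γ/p') ≤ κ * s := by
    intro s hs
    obtain ⟨hs1, hs2⟩ := hs
    have hss0 : (2:ℝ)^(-((p'-1+δ/2)/p')) ≤ s := by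
      apply s_lower p' (p'-1+δ/2) s (by linarith) hβpos hs1
      exact le_trans ht hs2
    have hspos : 0 < s := lt_of_lt_of_le hs00 hss0
    have hcore := core p' δ γ (γ*(p'-1+δ/2)/(p'*(1-γ))) K t s hq hδ hγ0 hγ1 hγβ rfl hK1
      (hKle s hss0) ht hspos hs2
    have humem : κ * s * t^(-(γ/p')) ∈ SC := ⟨by positivity, hcore⟩
    have hle : sInf SC ≤ κ * s * t^(-(γ/p')) := csInf_le hSC_bdd humem
    have hid : t^(-(γ/p')) * t^(γ/p') = 1 := by
      rw [← Real.rpow_add ht0, neg_add_cancel, Real.rpow_zero]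
    calc sInf SC * t^(γ/p') ≤ (κ * s * t^(-(γ/p'))) * t^(γ/p') :=
          mul_le_mul_of_nonneg_right hle (Real.rpow_nonneg ht0.le _)
      _ = κ * s * (t^(-(γ/p')) * t^(γ/p')) := by ring
      _ = κ * s := by rw [hid, mul_one]
  have hfin : sInf SC * t^(γ/p') / κ ≤ sInf S0 := by
    apply le_csInf hS0_ne
    intro s hs
    rw [div_le_iff₀ hκ0]
    calc sInf SC * t^(γ/p') ≤ κ * s := key s hs
      _ = s * κ := by ring
  rw [div_le_iff₀ hκ0] at hfin
  linarith
end

section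
/- Log-bump interpolation inequality: Let μ be a probability measure, 1<p<∞, p'=p/(p-1), τ>0, B(t)=t^{p'}log(e+t)^{p'-1+τ}, and B_0(t)=t^{p'}log(e+t)^{p'-1+τ/2}. Then there exist C>0 and γ = 1/(2+(p'-1)·2/τ) ∈ (0,1) such that for every nonnegative measurable f, ‖f‖_{B_0,μ} ≤ C·‖f‖_{B,μ}^{1-γ}·‖f‖_{L^{p'}(μ)}^{γ}. -/
open Real MeasureTheory ENNReal

/-- The Luxemburg norm (valued in `ℝ≥0∞`, with `sInf ∅ = ∞`) of `f` with respect to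
the Young function `Φ` and the measure `μ`. -/
noncomputable def luxNorm {α : Type*} [MeasurableSpace α] (μ : Measure α)
    (Φ : ℝ → ℝ) (f : α → ℝ) : ℝ≥0∞ :=
  sInf ((fun l : ℝ => ENNReal.ofReal l) ''
    {l : ℝ | 0 < l ∧ ∫⁻ x, ENNReal.ofReal (Φ (|f x| / l)) ∂μ ≤ 1})

lemma lux_aux_pt (q τ t lam : ℝ) (hq : 1 < q) (hτ : 0 < τ) (ht : 0 ≤ t)
    (hl0 : 0 < lam) (hl1 : lam ≤ 1) :
    (t/lam) ^ q * Real.log (Real.exp 1 + t/lam) ^ (q - 1 + τ/2)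
      ≤ (1 + τ/(2*q)) ^ (q - 1 + τ/2) *
        (t ^ q * Real.log (Real.exp 1 + t) ^ (q - 1 + τ)
         + lam ^ (-q) * (lam ^ (-(2*q/τ))) ^ (q - 1 + τ/2) * t ^ q) := by
  have hq0 : (0:ℝ) < q := by linarith
  set a0 : ℝ := q - 1 + τ/2 with ha0def
  have ha0 : 0 < a0 := by rw [ha0def]; linarith
  set L : ℝ := lam ^ (-(2*q/τ)) with hLdef
  have hL1 : 1 ≤ L := Real.one_le_rpow_of_pos_of_le_one_of_nonpos hl0 hl1 (by rw [neg_nonpos]; positivity)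
  have hL0 : 0 < L := by linarith
  set c1 : ℝ := τ/(2*q) with hc1def
  have hc1 : 0 < c1 := by positivity
  have he : (0:ℝ) < Real.exp 1 := Real.exp_pos 1
  have hW1 : 1 ≤ Real.log (Real.exp 1 + t) := by
    rw [Real.le_log_iff_exp_le (by positivity)]; linarith
  have hWl1 : 1 ≤ Real.log (Real.exp 1 + t/lam) := by
    have h0 : 0 ≤ t / lam := by positivity
    rw [Real.le_log_iff_exp_le (by positivity)]; linarith
  -- key log bound
  have hlog : Real.log (Real.exp 1 + t/lam) ≤ Real.log (Real.exp 1 + t) + c1 * L := by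
    have h1 : Real.exp 1 + t/lam ≤ (Real.exp 1 + t)/lam := by
      rw [add_div]
      have : Real.exp 1 ≤ Real.exp 1 / lam := by
        rw [le_div_iff₀ hl0]; nlinarith
      linarith
    have h2 : Real.log (Real.exp 1 + t/lam) ≤ Real.log ((Real.exp 1 + t)/lam) :=
      Real.log_le_log (by positivity) h1
    have h3 : Real.log ((Real.exp 1 + t)/lam) = Real.log (Real.exp 1 + t) - Real.log lam := by
      rw [Real.log_div (by positivity) (ne_of_gt hl0)]
    have h4 : Real.log L = -(2*q/τ) * Real.log lam := Real.log_rpow hl0 _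
    have h5 : Real.log L ≤ L := by
      have := Real.log_le_sub_one_of_pos hL0; linarith
    have h6 : -Real.log lam = c1 * Real.log L := by
      rw [h4, hc1def]; field_simp
    have h7 : c1 * Real.log L ≤ c1 * L := by nlinarith
    linarith
  have hdiv : (t/lam) ^ q = t ^ q * lam ^ (-q) := by
    rw [Real.div_rpow ht hl0.le, Real.rpow_neg hl0.le, div_eq_mul_inv]
  have hLam : lam ^ (-q) = L ^ (τ/2) := by
    rw [hLdef, ← Real.rpow_mul hl0.le]
    congr 1; field_simp
  have hlamq : 0 < lam ^ (-q) := by positivity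
  rcases le_total L (Real.log (Real.exp 1 + t)) with hc | hc
  · -- region 1 : L ≤ log(e+t)
    have hb : Real.log (Real.exp 1 + t/lam) ≤ (1+c1) * Real.log (Real.exp 1 + t) := by
      nlinarith
    calc (t/lam) ^ q * Real.log (Real.exp 1 + t/lam) ^ a0
        ≤ (t/lam) ^ q * ((1+c1) * Real.log (Real.exp 1 + t)) ^ a0 := by
          apply mul_le_mul_of_nonneg_left _ (by positivity)
          exact Real.rpow_le_rpow (by linarith) hb ha0.le
      _ = t ^ q * lam ^ (-q) * ((1+c1) ^ a0 * Real.log (Real.exp 1 + t) ^ a0) := by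
          rw [hdiv, Real.mul_rpow (by linarith) (by linarith)]
      _ ≤ t ^ q * Real.log (Real.exp 1 + t) ^ (τ/2) *
            ((1+c1) ^ a0 * Real.log (Real.exp 1 + t) ^ a0) := by
          apply mul_le_mul_of_nonneg_right _ (by positivity)
          apply mul_le_mul_of_nonneg_left _ (by positivity)
          rw [hLam]
          exact Real.rpow_le_rpow hL0.le hc (by positivity)
      _ = (1+c1) ^ a0 * (t ^ q * (Real.log (Real.exp 1 + t) ^ (τ/2) *
            Real.log (Real.exp 1 + t) ^ a0)) := by ring
      _ = (1+c1) ^ a0 * (t ^ q * Real.log (Real.exp 1 + t) ^ (q - 1 + τ)) := by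
          rw [← Real.rpow_add (by linarith)]
          congr 2
          rw [ha0def]; ring
      _ ≤ (1+c1) ^ a0 * (t ^ q * Real.log (Real.exp 1 + t) ^ (q - 1 + τ)
            + lam ^ (-q) * L ^ a0 * t ^ q) := by
          have h : 0 ≤ lam ^ (-q) * L ^ a0 * t ^ q := by positivity
          nlinarith [Real.rpow_pos_of_pos (show (0:ℝ) < 1 + c1 by linarith) a0]
  · -- region 2 : log(e+t) ≤ L
    have hb : Real.log (Real.exp 1 + t/lam) ≤ (1+c1) * L := by nlinarith
    calc (t/lam) ^ q * Real.log (Real.exp 1 + t/lam) ^ a0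
        ≤ (t/lam) ^ q * ((1+c1) * L) ^ a0 := by
          apply mul_le_mul_of_nonneg_left _ (by positivity)
          exact Real.rpow_le_rpow (by linarith) hb ha0.le
      _ = (1+c1) ^ a0 * (lam ^ (-q) * L ^ a0 * t ^ q) := by
          rw [hdiv, Real.mul_rpow (by linarith) hL0.le]; ring
      _ ≤ (1+c1) ^ a0 * (t ^ q * Real.log (Real.exp 1 + t) ^ (q - 1 + τ)
            + lam ^ (-q) * L ^ a0 * t ^ q) := by
          have h : 0 ≤ t ^ q * Real.log (Real.exp 1 + t) ^ (q - 1 + τ) := by positivity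
          nlinarith [Real.rpow_pos_of_pos (show (0:ℝ) < 1 + c1 by linarith) a0]

lemma lux_aux_div (q a0 s K : ℝ) (hq : 0 < q) (ha0 : 0 < a0) (hs : 0 ≤ s) (hK : 1 ≤ K) :
    (s/K) ^ q * Real.log (Real.exp 1 + s/K) ^ a0
      ≤ K ^ (-q) * (s ^ q * Real.log (Real.exp 1 + s) ^ a0) := by
  have hK0 : (0:ℝ) < K := by linarith
  have he : (0:ℝ) < Real.exp 1 := Real.exp_pos 1
  have hsK : s / K ≤ s := div_le_self hs hK
  have hWl1 : 1 ≤ Real.log (Real.exp 1 + s/K) := by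
    have h0 : 0 ≤ s / K := by positivity
    rw [Real.le_log_iff_exp_le (by positivity)]; linarith
  have h2 : Real.log (Real.exp 1 + s/K) ≤ Real.log (Real.exp 1 + s) :=
    Real.log_le_log (by positivity) (by linarith)
  have h1 : (s/K) ^ q = s ^ q * K ^ (-q) := by
    rw [Real.div_rpow hs hK0.le, Real.rpow_neg hK0.le, div_eq_mul_inv]
  calc (s/K) ^ q * Real.log (Real.exp 1 + s/K) ^ a0
      ≤ (s/K) ^ q * Real.log (Real.exp 1 + s) ^ a0 := by
        apply mul_le_mul_of_nonneg_left _ (by positivity)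
        exact Real.rpow_le_rpow (by linarith) h2 ha0.le
    _ = K ^ (-q) * (s ^ q * Real.log (Real.exp 1 + s) ^ a0) := by rw [h1]; ring

lemma lux_meas1 {α : Type} [MeasurableSpace α] (f : α → ℝ) (hf : Measurable f) (y c : ℝ) :
    Measurable fun x => ENNReal.ofReal ((f x) ^ y * Real.log (Real.exp 1 + f x) ^ c) := by
  measurability

lemma lux_meas2 {α : Type} [MeasurableSpace α] (f : α → ℝ) (hf : Measurable f) (y : ℝ) :
    Measurable fun x => ENNReal.ofReal ((f x) ^ y) := by
  measurability

lemma lux_exp_id (q τ : ℝ) (hq : 1 < q) (hτ : 0 < τ) :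
    (1/(2+(q-1)*2/τ)) * (-q) + (1/(2+(q-1)*2/τ)) * (-(2*q/τ)) * (q-1+τ/2) + q = 0 := by
  have h5 : (0:ℝ) < 2*τ+(q-1)*2 := by nlinarith
  have h6 : (0:ℝ) < (2*τ+(q-1)*2)*τ*2 := mul_pos (mul_pos h5 hτ) two_pos
  have h7 : (0:ℝ) < (2*τ+(q-1)*2)*((2*τ+(q-1)*2)*τ*2) := mul_pos h5 h6
  have h8 : (-1 + q + τ) ≠ 0 := by linarith
  field_simp
  ring_nf
  field_simp
  ring

set_option maxHeartbeats 2000000 in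
theorem stmt9 (p τ : ℝ) (hp : 1 < p) (hτ : 0 < τ) :
    ∃ C : ℝ, 0 < C ∧
      ∀ {α : Type} [MeasurableSpace α] (μ : Measure α) [IsProbabilityMeasure μ]
        (f : α → ℝ), Measurable f → (∀ x, 0 ≤ f x) →
        luxNorm μ
            (fun t : ℝ =>
              t ^ (p / (p - 1)) * Real.log (Real.exp 1 + t) ^ (p / (p - 1) - 1 + τ / 2)) f ≤
          ENNReal.ofReal C *
            luxNorm μ
                (fun t : ℝ =>
                  t ^ (p / (p - 1)) * Real.log (Real.exp 1 + t) ^ (p / (p - 1) - 1 + τ)) f ^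
              (1 - 1 / (2 + (p / (p - 1) - 1) * 2 / τ)) *
            ((∫⁻ x, ENNReal.ofReal (f x ^ (p / (p - 1))) ∂μ) ^ ((p - 1) / p)) ^
              (1 / (2 + (p / (p - 1) - 1) * 2 / τ)) := by
  have hp0 : 0 < p - 1 := by linarith
  set q : ℝ := p / (p - 1) with hqdef
  have hq : 1 < q := by
    rw [hqdef, lt_div_iff₀ hp0]; linarith
  have hq0 : (0:ℝ) < q := by linarith
  have hpq : (p - 1) / p = 1 / q := by rw [hqdef, one_div_div]
  set a0 : ℝ := q - 1 + τ/2 with ha0def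
  have ha0 : 0 < a0 := by rw [ha0def]; linarith
  set a1 : ℝ := q - 1 + τ with ha1def
  have ha1 : 0 < a1 := by rw [ha1def]; linarith
  have hden : 0 < 2 + (q - 1) * 2 / τ := by
    have h1 : 0 < (q - 1) * 2 / τ := by
      apply div_pos _ hτ; nlinarith
    linarith
  set γ : ℝ := 1 / (2 + (q - 1) * 2 / τ) with hγdef
  have hγ0 : 0 < γ := by rw [hγdef]; positivity
  have hγ1 : γ < 1 := by
    rw [hγdef, div_lt_one hden]
    have h1 : 0 < (q - 1) * 2 / τ := by
      apply div_pos _ hτ; nlinarith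
    linarith
  have hγc : (0:ℝ) < 1 - γ := by linarith
  set c2 : ℝ := (1 + τ/(2*q)) ^ a0 with hc2def
  have hc2 : 0 < c2 := by rw [hc2def]; positivity
  set C : ℝ := max 1 (2 * c2) with hCdef
  have hC1 : (1:ℝ) ≤ C := le_max_left _ _
  have hC0 : (0:ℝ) < C := by linarith
  have hC2 : 2 * c2 ≤ C := le_max_right _ _
  have hCq : C ≤ C ^ q := by
    calc C = C ^ (1:ℝ) := (Real.rpow_one C).symm
    _ ≤ C ^ q := Real.rpow_le_rpow_of_exponent_le hC1 (by linarith)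
  have hCq0 : 0 < C ^ q := Real.rpow_pos_of_pos hC0 q
  refine ⟨C, hC0, ?_⟩
  intro α _ μ _ f hf hf0
  have habs : ∀ x, |f x| = f x := fun x => abs_of_nonneg (hf0 x)
  simp only [luxNorm, habs]
  set I : ℝ≥0∞ := ∫⁻ x, ENNReal.ofReal (f x ^ q) ∂μ with hIdef
  rw [hpq]
  set S1 : Set ℝ :=
    {l | 0 < l ∧ ∫⁻ x, ENNReal.ofReal ((f x / l) ^ q *
        Real.log (Real.exp 1 + f x / l) ^ a1) ∂μ ≤ 1} with hS1def
  set T : Set ℝ≥0∞ := (fun l : ℝ => ENNReal.ofReal l) '' S1 with hTdef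
  set S0 : Set ℝ :=
    {l | 0 < l ∧ ∫⁻ x, ENNReal.ofReal ((f x / l) ^ q *
        Real.log (Real.exp 1 + f x / l) ^ a0) ∂μ ≤ 1} with hS0def
  show sInf ((fun l : ℝ => ENNReal.ofReal l) '' S0) ≤
      ENNReal.ofReal C * (sInf T) ^ (1 - γ) * (I ^ (1/q)) ^ γ
  -- I is controlled by every element of S1
  have hPle : ∀ l ∈ S1, I ≤ ENNReal.ofReal (l ^ q) := by
    rintro l ⟨hl0, hlint⟩
    have hstep : ∀ x, ENNReal.ofReal (f x ^ q)
        = ENNReal.ofReal ((f x / l) ^ q) * ENNReal.ofReal (l ^ q) := by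
      intro x
      have hfx := hf0 x
      rw [← ENNReal.ofReal_mul (by positivity)]
      congr 1
      rw [Real.div_rpow (hf0 x) hl0.le, div_mul_cancel₀]
      exact ne_of_gt (Real.rpow_pos_of_pos hl0 q)
    have hle1 : ∫⁻ x, ENNReal.ofReal ((f x / l) ^ q) ∂μ ≤ 1 := by
      refine le_trans (lintegral_mono fun x => ?_) hlint
      have hfx := hf0 x
      apply ENNReal.ofReal_le_ofReal
      have h1 : (1:ℝ) ≤ Real.log (Real.exp 1 + f x / l) ^ a1 := by
        have hx1 : 1 ≤ Real.log (Real.exp 1 + f x / l) := by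
          have h0 : 0 ≤ f x / l := by positivity
          rw [Real.le_log_iff_exp_le (by positivity)]; linarith
        calc (1:ℝ) = 1 ^ a1 := (Real.one_rpow a1).symm
        _ ≤ Real.log (Real.exp 1 + f x / l) ^ a1 := Real.rpow_le_rpow zero_le_one hx1 ha1.le
      nlinarith [Real.rpow_nonneg (show 0 ≤ f x / l by positivity) q]
    calc I = ∫⁻ x, ENNReal.ofReal ((f x / l) ^ q) * ENNReal.ofReal (l ^ q) ∂μ := by
          rw [hIdef]; exact lintegral_congr hstep
    _ = (∫⁻ x, ENNReal.ofReal ((f x / l) ^ q) ∂μ) * ENNReal.ofReal (l ^ q) :=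
          lintegral_mul_const' _ _ ENNReal.ofReal_ne_top
    _ ≤ 1 * ENNReal.ofReal (l ^ q) := by
          exact mul_le_mul_left hle1 _
    _ = ENNReal.ofReal (l ^ q) := one_mul _
  by_cases hI0 : I = 0
  · -- f = 0 a.e., LHS = 0
    have hae : ∀ᵐ x ∂μ, f x = 0 := by
      have hmeas : Measurable fun x => ENNReal.ofReal (f x ^ q) := lux_meas2 f hf q
      have h0 := (lintegral_eq_zero_iff hmeas).mp hI0
      filter_upwards [h0] with x hx
      simp only [Pi.zero_apply, ENNReal.ofReal_eq_zero] at hx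
      rcases (hf0 x).eq_or_lt with h | h
      · exact h.symm
      · exact absurd hx (not_le.mpr (Real.rpow_pos_of_pos h q))
    have hL0 : sInf ((fun l : ℝ => ENNReal.ofReal l) '' S0) = 0 := by
      refine le_antisymm ?_ (zero_le)
      refine ENNReal.le_of_forall_pos_le_add fun ε hε _ => ?_
      rw [zero_add]
      have hmem : (ε:ℝ) ∈ S0 := by
        constructor
        · exact_mod_cast hε
        · have hz : ∀ᵐ x ∂μ, ENNReal.ofReal ((f x / (ε:ℝ)) ^ q *
              Real.log (Real.exp 1 + f x / (ε:ℝ)) ^ a0) = 0 := by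
            filter_upwards [hae] with x hx
            rw [hx, zero_div, Real.zero_rpow hq0.ne', zero_mul, ENNReal.ofReal_zero]
          calc ∫⁻ x, ENNReal.ofReal ((f x / (ε:ℝ)) ^ q *
              Real.log (Real.exp 1 + f x / (ε:ℝ)) ^ a0) ∂μ
              = ∫⁻ _, 0 ∂μ := lintegral_congr_ae hz
            _ = 0 := lintegral_zero
            _ ≤ 1 := zero_le
      calc sInf ((fun l : ℝ => ENNReal.ofReal l) '' S0)
          ≤ ENNReal.ofReal (ε:ℝ) := sInf_le (Set.mem_image_of_mem _ hmem)
        _ = (ε : ℝ≥0∞) := ENNReal.ofReal_coe_nnreal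
    rw [hL0]; exact zero_le
  by_cases hA : sInf T = ⊤
  · -- RHS is ⊤
    have hPrγ : (I ^ (1/q)) ^ γ ≠ 0 := by
      rw [← ENNReal.rpow_mul]
      simp only [ne_eq, ENNReal.rpow_eq_zero_iff, not_or, not_and, not_lt]
      refine ⟨fun h => absurd h hI0, fun _ => by positivity⟩
    rw [hA, ENNReal.top_rpow_of_pos hγc,
      ENNReal.mul_top (ENNReal.ofReal_pos.mpr hC0).ne', ENNReal.top_mul hPrγ]
    exact le_top
  -- main case
  have hTne : T.Nonempty := by
    by_contra h
    rw [Set.not_nonempty_iff_eq_empty] at h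
    exact hA (by rw [h]; simp)
  obtain ⟨b0, l0, hl0S, rfl⟩ := hTne
  have hIne : I ≠ ⊤ := by
    exact ne_top_of_le_ne_top ENNReal.ofReal_ne_top (hPle l0 hl0S)
  set Pr : ℝ≥0∞ := I ^ (1/q) with hPrdef
  have hPr0 : Pr ≠ 0 := by
    simp only [hPrdef, ne_eq, ENNReal.rpow_eq_zero_iff, not_or, not_and, not_lt]
    exact ⟨fun h => absurd h hI0, fun h => absurd h hIne⟩
  have hPrT : Pr ≠ ⊤ := ENNReal.rpow_ne_top_of_nonneg (by positivity) hIne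
  set m2 : ℝ := Pr.toReal with hm2def
  have hm2 : 0 < m2 := ENNReal.toReal_pos hPr0 hPrT
  have hofm2 : ENNReal.ofReal m2 = Pr := ENNReal.ofReal_toReal hPrT
  have hIm2 : I = ENNReal.ofReal (m2 ^ q) := by
    have h1 : I = Pr ^ q := by
      rw [hPrdef, ← ENNReal.rpow_mul, one_div_mul_cancel hq0.ne', ENNReal.rpow_one]
    rw [h1, ← hofm2, ENNReal.ofReal_rpow_of_pos hm2]
  -- the key estimate for each member of S1
  have key : ∀ l ∈ S1, sInf ((fun l : ℝ => ENNReal.ofReal l) '' S0) ≤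
      (ENNReal.ofReal C * Pr ^ γ) * (ENNReal.ofReal l) ^ (1 - γ) := by
    rintro l ⟨hl0, hlint⟩
    have hm2l : m2 ≤ l := by
      have h1 : Pr ≤ ENNReal.ofReal l := by
        have h2 : I ≤ (ENNReal.ofReal l) ^ q := by
          rw [ENNReal.ofReal_rpow_of_pos hl0]; exact hPle l ⟨hl0, hlint⟩
        calc Pr = I ^ (1/q) := hPrdef
        _ ≤ ((ENNReal.ofReal l) ^ q) ^ (1/q) := ENNReal.rpow_le_rpow h2 (by positivity)
        _ = ENNReal.ofReal l := by
            rw [← ENNReal.rpow_mul, mul_one_div_cancel hq0.ne', ENNReal.rpow_one]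
      calc m2 = Pr.toReal := hm2def
      _ ≤ (ENNReal.ofReal l).toReal := ENNReal.toReal_mono ENNReal.ofReal_ne_top h1
      _ = l := ENNReal.toReal_ofReal hl0.le
    set m : ℝ := m2 / l with hmdef
    have hm0 : 0 < m := by positivity
    have hm1 : m ≤ 1 := by rw [hmdef, div_le_one hl0]; exact hm2l
    set lam0 : ℝ := m ^ γ with hlam0def
    have hlam00 : 0 < lam0 := Real.rpow_pos_of_pos hm0 γ
    have hlam01 : lam0 ≤ 1 := Real.rpow_le_one hm0.le hm1 hγ0.le
    set D : ℝ := lam0 ^ (-q) * (lam0 ^ (-(2*q/τ))) ^ a0 with hDdef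
    have hD0 : 0 < D := by rw [hDdef]; positivity
    -- the exponent identity
    have hDm : D * m ^ q = 1 := by
      have e1 : lam0 ^ (-q) = m ^ (γ * (-q)) := by
        rw [hlam0def, ← Real.rpow_mul hm0.le]
      have e2 : (lam0 ^ (-(2*q/τ))) ^ a0 = m ^ (γ * (-(2*q/τ)) * a0) := by
        rw [hlam0def, ← Real.rpow_mul hm0.le, ← Real.rpow_mul hm0.le]
      rw [hDdef, e1, e2, ← Real.rpow_add hm0, ← Real.rpow_add hm0]
      have hE : γ * (-q) + γ * (-(2*q/τ)) * a0 + q = 0 := by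
        rw [hγdef, ha0def]; exact lux_exp_id q τ hq hτ
      rw [hE, Real.rpow_zero]
    -- pointwise estimate
    have hpt : ∀ x, (f x / (C * l * lam0)) ^ q * Real.log (Real.exp 1 + f x / (C * l * lam0)) ^ a0
        ≤ (C ^ (-q) * c2) * ((f x / l) ^ q * Real.log (Real.exp 1 + f x / l) ^ a1
            + (D * l ^ (-q)) * f x ^ q) := by
      intro x
      have hfx := hf0 x
      have hrw : f x / (C * l * lam0) = ((f x / l) / lam0) / C := by
        rw [div_div, div_div]
        congr 1
        ring
      rw [hrw]
      calc ((f x / l) / lam0 / C) ^ q * Real.log (Real.exp 1 + (f x / l) / lam0 / C) ^ a0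
          ≤ C ^ (-q) * (((f x / l) / lam0) ^ q *
              Real.log (Real.exp 1 + (f x / l) / lam0) ^ a0) :=
            lux_aux_div q a0 _ C hq0 ha0 (by positivity) hC1
        _ ≤ C ^ (-q) * (c2 * ((f x / l) ^ q * Real.log (Real.exp 1 + f x / l) ^ a1
              + lam0 ^ (-q) * (lam0 ^ (-(2*q/τ))) ^ a0 * (f x / l) ^ q)) := by
            apply mul_le_mul_of_nonneg_left _ (by positivity)
            rw [hc2def, ha0def, ha1def]
            exact lux_aux_pt q τ (f x / l) lam0 hq hτ (by positivity) hlam00 hlam01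
        _ = (C ^ (-q) * c2) * ((f x / l) ^ q * Real.log (Real.exp 1 + f x / l) ^ a1
              + (D * l ^ (-q)) * f x ^ q) := by
            rw [hDdef]
            have : (f x / l) ^ q = f x ^ q * l ^ (-q) := by
              rw [Real.div_rpow hfx hl0.le, Real.rpow_neg hl0.le, div_eq_mul_inv]
            rw [this]; ring
    -- integrate the pointwise estimate
    have hmeas1 : Measurable fun x => ENNReal.ofReal ((f x / l) ^ q *
        Real.log (Real.exp 1 + f x / l) ^ a1) :=
      lux_meas1 (fun x => f x / l) (hf.div_const l) q a1
    have hint : ∫⁻ x, ENNReal.ofReal ((f x / (C * l * lam0)) ^ q *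
        Real.log (Real.exp 1 + f x / (C * l * lam0)) ^ a0) ∂μ ≤ 1 := by
      have step1 : ∫⁻ x, ENNReal.ofReal ((f x / (C * l * lam0)) ^ q *
          Real.log (Real.exp 1 + f x / (C * l * lam0)) ^ a0) ∂μ
          ≤ ∫⁻ x, ENNReal.ofReal ((C ^ (-q) * c2) *
              ((f x / l) ^ q * Real.log (Real.exp 1 + f x / l) ^ a1
                + (D * l ^ (-q)) * f x ^ q)) ∂μ :=
        lintegral_mono fun x => ENNReal.ofReal_le_ofReal (hpt x)
      have step2 : ∫⁻ x, ENNReal.ofReal ((C ^ (-q) * c2) *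
              ((f x / l) ^ q * Real.log (Real.exp 1 + f x / l) ^ a1
                + (D * l ^ (-q)) * f x ^ q)) ∂μ
          = ENNReal.ofReal (C ^ (-q) * c2) *
            ∫⁻ x, ENNReal.ofReal ((f x / l) ^ q * Real.log (Real.exp 1 + f x / l) ^ a1
                + (D * l ^ (-q)) * f x ^ q) ∂μ := by
        rw [← lintegral_const_mul' _ _ ENNReal.ofReal_ne_top]
        apply lintegral_congr fun x => ?_
        rw [← ENNReal.ofReal_mul (by positivity)]
      have step3 : ∫⁻ x, ENNReal.ofReal ((f x / l) ^ q * Real.log (Real.exp 1 + f x / l) ^ a1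
                + (D * l ^ (-q)) * f x ^ q) ∂μ
          = (∫⁻ x, ENNReal.ofReal ((f x / l) ^ q * Real.log (Real.exp 1 + f x / l) ^ a1) ∂μ)
            + ENNReal.ofReal (D * l ^ (-q)) * I := by
        have e1 : ∀ x, ENNReal.ofReal ((f x / l) ^ q * Real.log (Real.exp 1 + f x / l) ^ a1
                + (D * l ^ (-q)) * f x ^ q)
            = ENNReal.ofReal ((f x / l) ^ q * Real.log (Real.exp 1 + f x / l) ^ a1)
              + ENNReal.ofReal (D * l ^ (-q)) * ENNReal.ofReal (f x ^ q) := by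
          intro x
          have hfx := hf0 x
          have h1 : (0:ℝ) ≤ (f x / l) ^ q * Real.log (Real.exp 1 + f x / l) ^ a1 := by
            have h0 : 0 ≤ f x / l := by positivity
            have hWl1 : 0 ≤ Real.log (Real.exp 1 + f x / l) := by
              apply Real.log_nonneg
              have := Real.exp_pos 1
              nlinarith [Real.add_one_le_exp 1]
            positivity
          rw [ENNReal.ofReal_add h1 (by positivity), ← ENNReal.ofReal_mul (by positivity)]
        rw [lintegral_congr e1, lintegral_add_left hmeas1,
          lintegral_const_mul' _ _ ENNReal.ofReal_ne_top]
      have hDl : ENNReal.ofReal (D * l ^ (-q)) * I = 1 := by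
        rw [hIm2, ← ENNReal.ofReal_mul (by positivity)]
        have : D * l ^ (-q) * m2 ^ q = D * m ^ q := by
          rw [hmdef, Real.div_rpow hm2.le hl0.le, Real.rpow_neg hl0.le]
          field_simp
        rw [this, hDm, ENNReal.ofReal_one]
      have hfinal : ENNReal.ofReal (C ^ (-q) * c2) * (1 + 1) ≤ 1 := by
        have h2 : ENNReal.ofReal (C ^ (-q) * c2) * (1 + 1)
            = ENNReal.ofReal (C ^ (-q) * c2 * 2) := by
          have h21 : ((1:ℝ≥0∞)+1) = ENNReal.ofReal 2 := by
            rw [ENNReal.ofReal_ofNat]; norm_num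
          rw [h21, ← ENNReal.ofReal_mul (by positivity)]
        rw [h2, ENNReal.ofReal_le_one]
        rw [Real.rpow_neg hC0.le]
        rw [show (C ^ q)⁻¹ * c2 * 2 = (2 * c2) / (C ^ q) by ring, div_le_one hCq0]
        linarith
      calc ∫⁻ x, ENNReal.ofReal ((f x / (C * l * lam0)) ^ q *
          Real.log (Real.exp 1 + f x / (C * l * lam0)) ^ a0) ∂μ
          ≤ ENNReal.ofReal (C ^ (-q) * c2) *
            ((∫⁻ x, ENNReal.ofReal ((f x / l) ^ q * Real.log (Real.exp 1 + f x / l) ^ a1) ∂μ)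
              + ENNReal.ofReal (D * l ^ (-q)) * I) := by
            rw [← step3, ← step2]; exact step1
        _ ≤ ENNReal.ofReal (C ^ (-q) * c2) * (1 + 1) := by
            apply mul_le_mul_right
            rw [hDl]
            exact add_le_add_left hlint 1
        _ ≤ 1 := hfinal
    -- membership and conclusion
    have hmem : C * l * lam0 ∈ S0 := ⟨by positivity, hint⟩
    have hsle := sInf_le (Set.mem_image_of_mem (fun l : ℝ => ENNReal.ofReal l) hmem)
    refine le_trans hsle (le_of_eq ?_)
    show ENNReal.ofReal (C * l * lam0)
        = ENNReal.ofReal C * Pr ^ γ * (ENNReal.ofReal l) ^ (1 - γ)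
    have hfact : C * l * lam0 = C * (l ^ (1 - γ) * m2 ^ γ) := by
      rw [hlam0def, hmdef, Real.div_rpow hm2.le hl0.le, Real.rpow_sub hl0, Real.rpow_one]
      field_simp
    rw [hfact, ENNReal.ofReal_mul hC0.le, ENNReal.ofReal_mul (by positivity),
      ← ENNReal.ofReal_rpow_of_pos hl0, ← ENNReal.ofReal_rpow_of_pos hm2, hofm2]
    ring
  -- take the infimum over S1
  have hc0 : ENNReal.ofReal C * Pr ^ γ ≠ 0 := by
    apply mul_ne_zero
    · exact (ENNReal.ofReal_pos.mpr hC0).ne'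
    · simp only [ne_eq, ENNReal.rpow_eq_zero_iff, not_or, not_and, not_lt]
      exact ⟨fun h => absurd h hPr0, fun h => absurd h hPrT⟩
  have hcT : ENNReal.ofReal C * Pr ^ γ ≠ ⊤ := by
    apply ENNReal.mul_ne_top ENNReal.ofReal_ne_top
    exact ENNReal.rpow_ne_top_of_nonneg hγ0.le hPrT
  have hmap : (sInf T) ^ (1 - γ) = ⨅ b ∈ T, b ^ (1 - γ) := by
    have h := OrderIso.map_sInf (ENNReal.orderIsoRpow (1 - γ) hγc) T
    simpa only [ENNReal.orderIsoRpow_apply] using h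
  have hR : ENNReal.ofReal C * (sInf T) ^ (1 - γ) * Pr ^ γ
      = ⨅ l ∈ S1, (ENNReal.ofReal C * Pr ^ γ) * (ENNReal.ofReal l) ^ (1 - γ) := by
    rw [mul_right_comm, hmap, hTdef, iInf_image,
      ENNReal.mul_iInf_of_ne hc0 hcT]
    refine iInf_congr fun l => ?_
    rw [ENNReal.mul_iInf_of_ne hc0 hcT]
  rw [hR]
  exact le_iInf₂ fun l hl => key l hl
end

section
/- Carleson embedding for sums over dyadic cubes: Let {μ_Q}_{Q dyadic} be a Carleson sequence, i.e., for every dyadic cube R, Σ_{Q ⊆ R} μ_Q ≤ Λ|R|. Then for every nonnegative measurable F and every dyadic cube Q_0, Σ_{Q ⊆ Q_0} μ_Q · inf_{x∈Q} F(x) ≤ Λ·∫_{Q_0} F(x)dx. -/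
open MeasureTheory ENNReal

lemma vol_level (b : ℝ≥0∞) : volume ({s : ℝ | ENNReal.ofReal s < b} ∩ Set.Ioi 0) = b := by
  rcases eq_or_ne b ⊤ with hb | hb
  · have : {s : ℝ | ENNReal.ofReal s < b} ∩ Set.Ioi 0 = Set.Ioi 0 := by
      ext s; simp [hb]
    rw [this, Real.volume_Ioi, hb]
  · have : {s : ℝ | ENNReal.ofReal s < b} ∩ Set.Ioi 0 = Set.Ioo 0 b.toReal := by
      ext s
      simp only [Set.mem_inter_iff, Set.mem_setOf_eq, Set.mem_Ioi, Set.mem_Ioo]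
      constructor
      · rintro ⟨h1, h2⟩
        exact ⟨h2, (ENNReal.ofReal_lt_iff_lt_toReal h2.le hb).mp h1⟩
      · rintro ⟨h1, h2⟩
        exact ⟨(ENNReal.ofReal_lt_iff_lt_toReal h1.le hb).mpr h2, h1⟩
    rw [this, Real.volume_Ioo, sub_zero, ENNReal.ofReal_toReal hb]

lemma level_meas (b : ℝ≥0∞) : MeasurableSet {s : ℝ | ENNReal.ofReal s < b} :=
  ENNReal.measurable_ofReal (measurableSet_Iio (a := b))

lemma mul_eq_lintegral (a b : ℝ≥0∞) :
    a * b = ∫⁻ t in Set.Ioi (0:ℝ), {s : ℝ | ENNReal.ofReal s < b}.indicator (fun _ => a) t := by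
  rw [lintegral_indicator_const (level_meas b), Measure.restrict_apply (level_meas b), vol_level]

lemma layercake {α : Type*} [MeasurableSpace α] (ρ : Measure α) [SFinite ρ]
    (F : α → ℝ≥0∞) (hF : Measurable F) :
    ∫⁻ x, F x ∂ρ = ∫⁻ t in Set.Ioi (0:ℝ), ρ {x | ENNReal.ofReal t < F x} := by
  have h1 : ∀ x, F x = ∫⁻ t in Set.Ioi (0:ℝ),
      {s : ℝ | ENNReal.ofReal s < F x}.indicator (fun _ => (1:ℝ≥0∞)) t := by
    intro x; rw [← mul_eq_lintegral 1 (F x), one_mul]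
  calc ∫⁻ x, F x ∂ρ
      = ∫⁻ x, (∫⁻ t in Set.Ioi (0:ℝ),
          {s : ℝ | ENNReal.ofReal s < F x}.indicator (fun _ => (1:ℝ≥0∞)) t) ∂ρ := by
        exact lintegral_congr h1
    _ = ∫⁻ t in Set.Ioi (0:ℝ), (∫⁻ x,
          {s : ℝ | ENNReal.ofReal s < F x}.indicator (fun _ => (1:ℝ≥0∞)) t ∂ρ) := by
        apply lintegral_lintegral_swap
        have : Measurable (Function.uncurry fun x t =>
            ({s : ℝ | ENNReal.ofReal s < F x}.indicator (fun _ => (1:ℝ≥0∞)) t)) := by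
          have hset : MeasurableSet {p : α × ℝ | ENNReal.ofReal p.2 < F p.1} :=
            measurableSet_lt (ENNReal.measurable_ofReal.comp measurable_snd)
              (hF.comp measurable_fst)
          have : (Function.uncurry fun x t =>
              ({s : ℝ | ENNReal.ofReal s < F x}.indicator (fun _ => (1:ℝ≥0∞)) t)) =
              {p : α × ℝ | ENNReal.ofReal p.2 < F p.1}.indicator (fun _ => (1:ℝ≥0∞)) := by
            ext p
            simp [Function.uncurry, Set.indicator_apply]
          rw [this]
          exact Measurable.indicator measurable_const hset
        exact this.aemeasurable
    _ = ∫⁻ t in Set.Ioi (0:ℝ), ρ {x | ENNReal.ofReal t < F x} := by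
        apply lintegral_congr
        intro t
        have : ∀ x, ({s : ℝ | ENNReal.ofReal s < F x}.indicator (fun _ => (1:ℝ≥0∞)) t)
            = {x | ENNReal.ofReal t < F x}.indicator (fun _ => (1:ℝ≥0∞)) x := by
          intro x; simp [Set.indicator_apply]
        rw [lintegral_congr this, lintegral_indicator_const, one_mul]
        exact measurableSet_lt measurable_const hF

lemma max_superset {α : Type*} (Q : ℕ → Set α) (T : Finset ℕ) (i : ℕ) (hi : i ∈ T) :
    ∃ j ∈ T, Q i ⊆ Q j ∧ ∀ k ∈ T, ¬ Q j ⊂ Q k := by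
  classical
  set U : Finset (Set α) := (T.filter (fun k => Q i ⊆ Q k)).image Q with hU
  have hne : U.Nonempty :=
    ⟨Q i, Finset.mem_image.mpr ⟨i, Finset.mem_filter.mpr ⟨hi, subset_rfl⟩, rfl⟩⟩
  obtain ⟨V, hV, hmax⟩ := U.exists_maximal hne
  obtain ⟨j, hj, rfl⟩ := Finset.mem_image.mp hV
  have hjT := (Finset.mem_filter.mp hj).1
  have hij := (Finset.mem_filter.mp hj).2
  refine ⟨j, hjT, hij, fun k hk hlt => ?_⟩
  have hQk : Q k ∈ U :=
    Finset.mem_image.mpr ⟨k, Finset.mem_filter.mpr ⟨hk, hij.trans hlt.subset⟩, rfl⟩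
  exact (not_subset_of_ssubset hlt) (hmax hQk hlt.subset)

lemma key {d : ℕ} (Q : ℕ → Set (Fin d → ℝ))
    (hmeas : ∀ n, MeasurableSet (Q n))
    (hgrid : ∀ m n, Q m ⊆ Q n ∨ Q n ⊆ Q m ∨ Disjoint (Q m) (Q n))
    (μ : ℕ → ℝ≥0∞) (Λ : ℝ≥0∞)
    (hCarleson : ∀ n, ∑' m : {m // Q m ⊆ Q n}, μ m ≤ Λ * volume (Q n))
    (F : (Fin d → ℝ) → ℝ≥0∞) (hF : Measurable F) (n₀ : ℕ) (t : ℝ≥0∞) :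
    ∑' m : {m : {m // Q m ⊆ Q n₀} // t < essInf F (volume.restrict (Q m.1))}, μ m.1.1
      ≤ Λ * volume ({x | t < F x} ∩ Q n₀) := by
  classical
  rw [ENNReal.tsum_eq_iSup_sum]
  apply iSup_le
  intro s
  set T : Finset ℕ := s.image (fun m => m.1.1) with hT
  have hTprop : ∀ j ∈ T, Q j ⊆ Q n₀ ∧ t < essInf F (volume.restrict (Q j)) := by
    intro j hj
    obtain ⟨m, hm, rfl⟩ := Finset.mem_image.mp hj
    exact ⟨m.1.2, m.2⟩
  have H : ∀ m : {m : {m // Q m ⊆ Q n₀} // t < essInf F (volume.restrict (Q m.1))},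
      ∃ j, m ∈ s → (j ∈ T ∧ Q m.1.1 ⊆ Q j ∧ ∀ k ∈ T, ¬ Q j ⊂ Q k) := by
    intro m
    by_cases hm : m ∈ s
    · obtain ⟨j, hj1, hj2, hj3⟩ := max_superset Q T m.1.1 (Finset.mem_image_of_mem _ hm)
      exact ⟨j, fun _ => ⟨hj1, hj2, hj3⟩⟩
    · exact ⟨0, fun h => absurd h hm⟩
  choose r hr using H
  set g : {m : {m // Q m ⊆ Q n₀} // t < essInf F (volume.restrict (Q m.1))} →
      Set (Fin d → ℝ) := fun m => Q (r m) with hg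
  have hmaps : ∀ m ∈ s, g m ∈ s.image g := fun m hm => Finset.mem_image_of_mem _ hm
  rw [← Finset.sum_fiberwise_of_maps_to hmaps (fun m => μ m.1.1)]
  have fiber_bound : ∀ V ∈ s.image g,
      ∑ m ∈ s.filter (fun m => g m = V), μ m.1.1 ≤ Λ * volume V := by
    intro V hV
    obtain ⟨m₀, hm₀, rfl⟩ := Finset.mem_image.mp hV
    set fib := s.filter (fun m => g m = g m₀) with hfib
    have hinj : ∀ m ∈ fib, ∀ m' ∈ fib, m.1.1 = m'.1.1 → m = m' := by
      intro m _ m' _ h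
      exact Subtype.ext (Subtype.ext h)
    have step1 : ∑ m ∈ fib, μ m.1.1 = ∑ k ∈ fib.image (fun m => m.1.1), μ k :=
      (Finset.sum_image hinj).symm
    have step2 : ∀ k ∈ fib.image (fun m => m.1.1), Q k ⊆ Q (r m₀) := by
      intro k hk
      obtain ⟨m, hm, rfl⟩ := Finset.mem_image.mp hk
      have hms : m ∈ s := (Finset.mem_filter.mp hm).1
      have hgeq : Q (r m) = Q (r m₀) := (Finset.mem_filter.mp hm).2
      exact ((hr m hms).2.1).trans hgeq.subset
    calc ∑ m ∈ fib, μ m.1.1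
        = ∑ k ∈ fib.image (fun m => m.1.1),
            Set.indicator {k | Q k ⊆ Q (r m₀)} μ k := by
          rw [step1]
          refine Finset.sum_congr rfl (fun k hk => ?_)
          have hk' : k ∈ {k : ℕ | Q k ⊆ Q (r m₀)} := step2 k hk
          exact (Set.indicator_of_mem hk' μ).symm
      _ ≤ ∑' k : ℕ, Set.indicator {k | Q k ⊆ Q (r m₀)} μ k := ENNReal.sum_le_tsum _
      _ = ∑' k : {k // Q k ⊆ Q (r m₀)}, μ k := (tsum_subtype _ μ).symm
      _ ≤ Λ * volume (Q (r m₀)) := hCarleson (r m₀)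
  have hVfacts : ∀ V ∈ s.image g, ∃ j ∈ T, Q j = V ∧ (∀ k ∈ T, ¬ Q j ⊂ Q k) := by
    intro V hV
    obtain ⟨m, hm, rfl⟩ := Finset.mem_image.mp hV
    exact ⟨r m, (hr m hm).1, rfl, (hr m hm).2.2⟩
  have vol_bound : ∑ V ∈ s.image g, volume V ≤ volume ({x | t < F x} ∩ Q n₀) := by
    have hle : ∀ V ∈ s.image g, volume V ≤ volume (V ∩ {x | t < F x}) := by
      intro V hV
      obtain ⟨j, hjT, rfl, _⟩ := hVfacts V hV
      have hess := (hTprop j hjT).2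
      have hae : ∀ᵐ x ∂(volume.restrict (Q j)), t < F x := ae_lt_of_lt_essInf hess
      have h0 : (volume.restrict (Q j)) {x | t < F x}ᶜ = 0 := by
        rw [Set.compl_setOf]
        exact ae_iff.mp hae
      have : volume (Q j) = (volume.restrict (Q j)) Set.univ := by
        rw [Measure.restrict_apply_univ]
      rw [this, ← Set.union_compl_self {x | t < F x}, Set.union_comm]
      calc (volume.restrict (Q j)) ({x | t < F x}ᶜ ∪ {x | t < F x})
          ≤ (volume.restrict (Q j)) {x | t < F x}ᶜ
            + (volume.restrict (Q j)) {x | t < F x} := measure_union_le _ _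
        _ = (volume.restrict (Q j)) {x | t < F x} := by rw [h0, zero_add]
        _ = volume ({x | t < F x} ∩ Q j) := Measure.restrict_apply' (hmeas j)
        _ = volume (Q j ∩ {x | t < F x}) := by rw [Set.inter_comm]
    have hdisj : (↑(s.image g) : Set (Set (Fin d → ℝ))).PairwiseDisjoint
        (fun V => V ∩ {x | t < F x}) := by
      intro V hV V' hV' hne
      obtain ⟨j, hjT, rfl, hjmax⟩ := hVfacts V (by exact_mod_cast hV)
      obtain ⟨j', hjT', rfl, hjmax'⟩ := hVfacts V' (by exact_mod_cast hV')
      have hd : Disjoint (Q j) (Q j') := by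
        rcases hgrid j j' with h | h | h
        · exact absurd (HasSubset.Subset.ssubset_of_ne h hne) (hjmax j' hjT')
        · exact absurd (HasSubset.Subset.ssubset_of_ne h (Ne.symm hne)) (hjmax' j hjT)
        · exact h
      exact (hd.mono Set.inter_subset_left Set.inter_subset_left)
    have hmeasW : ∀ V ∈ s.image g, MeasurableSet (V ∩ {x | t < F x}) := by
      intro V hV
      obtain ⟨j, _, rfl, _⟩ := hVfacts V hV
      exact (hmeas j).inter (measurableSet_lt measurable_const hF)
    calc ∑ V ∈ s.image g, volume V
        ≤ ∑ V ∈ s.image g, volume (V ∩ {x | t < F x}) := Finset.sum_le_sum hle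
      _ = volume (⋃ V ∈ s.image g, V ∩ {x | t < F x}) :=
          (measure_biUnion_finset hdisj hmeasW).symm
      _ ≤ volume ({x | t < F x} ∩ Q n₀) := by
          apply measure_mono
          intro x hx
          simp only [Set.mem_iUnion] at hx
          obtain ⟨V, hV, hxV⟩ := hx
          obtain ⟨j, hjT, rfl, _⟩ := hVfacts V hV
          exact ⟨hxV.2, (hTprop j hjT).1 hxV.1⟩
  calc ∑ V ∈ s.image g, ∑ m ∈ s.filter (fun m => g m = V), μ m.1.1
      ≤ ∑ V ∈ s.image g, Λ * volume V := Finset.sum_le_sum fiber_bound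
    _ = Λ * ∑ V ∈ s.image g, volume V := by rw [Finset.mul_sum]
    _ ≤ Λ * volume ({x | t < F x} ∩ Q n₀) := mul_le_mul_right vol_bound Λ


/-- Carleson embedding for a grid of cubes: if `{μ n}` is a Carleson sequence for a
nested (grid-like) family of cubes `Q`, then sums of `μ n · essInf_{Q n} F` are
controlled by the integral of `F`. -/
theorem stmt11 (d : ℕ) (Q : ℕ → Set (Fin d → ℝ))
    (hmeas : ∀ n, MeasurableSet (Q n))
    (hgrid : ∀ m n, Q m ⊆ Q n ∨ Q n ⊆ Q m ∨ Disjoint (Q m) (Q n))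
    (μ : ℕ → ℝ≥0∞) (Λ : ℝ≥0∞)
    (hCarleson : ∀ n, ∑' m : {m // Q m ⊆ Q n}, μ m ≤ Λ * volume (Q n))
    (F : (Fin d → ℝ) → ℝ≥0∞) (hF : Measurable F) (n₀ : ℕ) :
    ∑' m : {m // Q m ⊆ Q n₀}, μ m * essInf F (volume.restrict (Q m)) ≤
      Λ * ∫⁻ x in Q n₀, F x := by
  classical
  have hmeasfun : Measurable fun τ : ℝ => (volume.restrict (Q n₀)) {x | ENNReal.ofReal τ < F x} := by
    apply Antitone.measurable
    intro τ τ' h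
    exact measure_mono (fun x hx => lt_of_le_of_lt (ENNReal.ofReal_le_ofReal h) hx)
  calc ∑' m : {m // Q m ⊆ Q n₀}, μ m.1 * essInf F (volume.restrict (Q m.1))
      = ∑' m : {m // Q m ⊆ Q n₀}, ∫⁻ τ in Set.Ioi (0:ℝ),
          {s : ℝ | ENNReal.ofReal s < essInf F (volume.restrict (Q m.1))}.indicator
            (fun _ => μ m.1) τ := tsum_congr (fun m => mul_eq_lintegral _ _)
    _ = ∫⁻ τ in Set.Ioi (0:ℝ), ∑' m : {m // Q m ⊆ Q n₀},
          {s : ℝ | ENNReal.ofReal s < essInf F (volume.restrict (Q m.1))}.indicator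
            (fun _ => μ m.1) τ :=
        (lintegral_tsum fun m => (measurable_const.indicator (level_meas _)).aemeasurable).symm
    _ ≤ ∫⁻ τ in Set.Ioi (0:ℝ), Λ * volume ({x | ENNReal.ofReal τ < F x} ∩ Q n₀) := by
        apply lintegral_mono
        intro τ
        have h1 : ∀ m : {m // Q m ⊆ Q n₀},
            ({s : ℝ | ENNReal.ofReal s < essInf F (volume.restrict (Q m.1))}.indicator
              (fun _ => μ m.1) τ)
            = {m : {m // Q m ⊆ Q n₀} |
                ENNReal.ofReal τ < essInf F (volume.restrict (Q m.1))}.indicator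
                (fun m => μ m.1) m := by
          intro m; simp [Set.indicator_apply]
        dsimp only
        rw [tsum_congr h1, ← tsum_subtype]
        exact key Q hmeas hgrid μ Λ hCarleson F hF n₀ (ENNReal.ofReal τ)
    _ = Λ * ∫⁻ τ in Set.Ioi (0:ℝ), (volume.restrict (Q n₀)) {x | ENNReal.ofReal τ < F x} := by
        have hrw : ∀ τ : ℝ, Λ * volume ({x | ENNReal.ofReal τ < F x} ∩ Q n₀)
            = Λ * (volume.restrict (Q n₀)) {x | ENNReal.ofReal τ < F x} := by
          intro τ; rw [Measure.restrict_apply' (hmeas n₀)]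
        rw [lintegral_congr hrw, lintegral_const_mul Λ hmeasfun]
    _ = Λ * ∫⁻ x in Q n₀, F x := by rw [← layercake _ F hF]
end

section
/- The Orlicz maximal operator bound: fix 1<p<∞ and let Φ be a Young function satisfying the B_p condition (∫_c^∞ Φ(t)/t^p dt/t < ∞). Then the Orlicz maximal operator M_Φ f(x) = sup_{Q∋x} ‖f‖_{Φ,Q} is bounded on L^p(ℝ^d): ‖M_Φ f‖_{L^p} ≤ C‖f‖_{L^p}, with C depending on p, d, and Φ. -/
open Real MeasureTheory ENNReal

/-- An axis-parallel cube in `ℝ^d`. -/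
def IsCube (d : ℕ) (Q : Set (Fin d → ℝ)) : Prop :=
  ∃ (x : Fin d → ℝ) (r : ℝ), 0 < r ∧
    Q = {y : Fin d → ℝ | ∀ i, x i ≤ y i ∧ y i ≤ x i + r}

/-- The normalized Lebesgue measure on a set `Q`. -/
noncomputable def normMeas {d : ℕ} (Q : Set (Fin d → ℝ)) :
    Measure (Fin d → ℝ) :=
  (volume Q)⁻¹ • volume.restrict Q

/-- The Orlicz maximal operator `M_Φ f(x) = sup_{Q ∋ x} ‖f‖_{Φ,Q}`, the supremum
being over all cubes containing `x`. -/
noncomputable def orliczMaximal {d : ℕ} (Φ : ℝ → ℝ) (f : (Fin d → ℝ) → ℝ)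
    (x : Fin d → ℝ) : ℝ≥0∞ :=
  ⨆ Q : {Q : Set (Fin d → ℝ) // IsCube d Q ∧ x ∈ Q}, luxNorm (normMeas Q.1) Φ f


namespace OrliczAux

def cubeSet {d : ℕ} (z : Fin d → ℝ) (r : ℝ) : Set (Fin d → ℝ) :=
  {y : Fin d → ℝ | ∀ i, z i ≤ y i ∧ y i ≤ z i + r}

lemma cube_eq_closedBall {d : ℕ} (z : Fin d → ℝ) {r : ℝ} (hr : 0 ≤ r) :
    cubeSet z r = Metric.closedBall (fun i => z i + r / 2) (r / 2) := by
  ext y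
  rw [Metric.mem_closedBall, dist_pi_le_iff (by linarith)]
  constructor
  · intro h i
    rw [Real.dist_eq, abs_le]
    have h1 := (h i).1
    have h2 := (h i).2
    constructor <;> linarith
  · intro h i
    have h1 := h i
    rw [Real.dist_eq, abs_le] at h1
    constructor <;> [linarith [h1.1, h1.2]; linarith [h1.1, h1.2]]

lemma volume_cube {d : ℕ} (z : Fin d → ℝ) {r : ℝ} (hr : 0 ≤ r) :
    volume (cubeSet z r) = ENNReal.ofReal (r ^ d) := by
  rw [cube_eq_closedBall z hr, Real.volume_pi_closedBall _ (by linarith)]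
  have : 2 * (r / 2) = r := by ring
  rw [this, Fintype.card_fin]

section Phi
variable {Φ : ℝ → ℝ} (hconv : ConvexOn ℝ (Set.Ici 0) Φ) (hmono : MonotoneOn Φ (Set.Ici 0))
  (h0 : Φ 0 = 0)

include hmono h0 in
lemma phi_nonneg (t : ℝ) (ht : 0 ≤ t) : 0 ≤ Φ t := by
  rw [← h0]; exact hmono (Set.mem_Ici.2 (le_refl 0)) ht ht

include hconv h0 in
lemma phi_le_mul_self (t : ℝ) (ht : 0 ≤ t) (ht1 : t ≤ 1) : Φ t ≤ t * Φ 1 := by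
  have := hconv.2 (Set.mem_Ici.2 (le_refl (0:ℝ))) (Set.mem_Ici.2 zero_le_one)
    (by linarith : (0:ℝ) ≤ 1 - t) ht (by ring)
  simp only [smul_eq_mul, mul_zero, mul_one, zero_add, h0] at this
  linarith

include hconv h0 in
lemma phi_half (t : ℝ) (ht : 0 ≤ t) : Φ t ≤ Φ (2 * t) / 2 := by
  have := hconv.2 (Set.mem_Ici.2 (le_refl (0:ℝ))) (Set.mem_Ici.2 (by linarith : (0:ℝ) ≤ 2*t))
    (by norm_num : (0:ℝ) ≤ (1:ℝ)/2) (by norm_num : (0:ℝ) ≤ (1:ℝ)/2) (by norm_num)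
  simp only [smul_eq_mul] at this
  have h2 : (1:ℝ)/2 * 0 + 1/2 * (2*t) = t := by ring
  rw [h2, h0] at this
  linarith

include hconv hmono h0 in
lemma exists_small : ∃ t₀ : ℝ, 0 < t₀ ∧ Φ t₀ ≤ 1 / 2 := by
  have hΦ1 : 0 ≤ Φ 1 := phi_nonneg hmono h0 1 zero_le_one
  refine ⟨min 1 (1 / (2 * (Φ 1 + 1))), ?_, ?_⟩
  · positivity
  · have h1 : min 1 (1 / (2 * (Φ 1 + 1))) ≤ 1 := min_le_left _ _
    have h0' : (0:ℝ) ≤ min 1 (1 / (2 * (Φ 1 + 1))) := by positivity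
    calc Φ (min 1 (1 / (2 * (Φ 1 + 1)))) ≤ min 1 (1 / (2 * (Φ 1 + 1))) * Φ 1 :=
          phi_le_mul_self hconv h0 _ h0' h1
      _ ≤ (1 / (2 * (Φ 1 + 1))) * Φ 1 := by
          apply mul_le_mul_of_nonneg_right (min_le_right _ _) hΦ1
      _ ≤ 1 / 2 := by
          rw [div_mul_eq_mul_div, mul_comm]
          rw [div_le_div_iff₀ (by positivity) (by norm_num)]
          nlinarith
end Phi

section Lux
variable {α : Type*} [MeasurableSpace α] (μ : Measure α) (Φ : ℝ → ℝ) (f : α → ℝ)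

lemma luxA {l : ℝ} (hl : 0 < l)
    (h : ∫⁻ x, ENNReal.ofReal (Φ (|f x| / l)) ∂μ ≤ 1) :
    luxNorm μ Φ f ≤ ENNReal.ofReal l :=
  sInf_le ⟨l, ⟨hl, h⟩, rfl⟩

lemma luxB (hmono : MonotoneOn Φ (Set.Ici 0)) {l : ℝ} (hl : 0 < l)
    (h : 1 < ∫⁻ x, ENNReal.ofReal (Φ (|f x| / l)) ∂μ) :
    ENNReal.ofReal l ≤ luxNorm μ Φ f := by
  apply le_sInf
  rintro b ⟨l', ⟨hl', hint⟩, rfl⟩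
  apply ENNReal.ofReal_le_ofReal
  by_contra hlt
  push_neg at hlt
  have hmonoint : ∫⁻ x, ENNReal.ofReal (Φ (|f x| / l)) ∂μ ≤
      ∫⁻ x, ENNReal.ofReal (Φ (|f x| / l')) ∂μ := by
    apply lintegral_mono
    intro x
    apply ENNReal.ofReal_le_ofReal
    apply hmono (Set.mem_Ici.2 (by positivity)) (Set.mem_Ici.2 (by positivity))
    apply div_le_div_of_nonneg_left (abs_nonneg _) hl' hlt.le
  exact absurd (h.trans_le (hmonoint.trans hint)) (by simp)

end Lux



lemma claimA {p : ℝ} (hp : 1 < p) (a : ℝ≥0∞) :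
    ∫⁻ t in Set.Ioi (0:ℝ),
      (if ENNReal.ofReal t < a then ENNReal.ofReal (p * t ^ (p - 1)) else 0) = a ^ p := by
  have hp0 : (0:ℝ) < p := by linarith
  rcases eq_or_ne a 0 with rfl | ha0
  · rw [ENNReal.zero_rpow_of_pos hp0]
    rw [← lintegral_zero (μ := volume.restrict (Set.Ioi (0:ℝ)))]
    apply lintegral_congr
    intro t; simp
  rcases eq_or_ne a ⊤ with rfl | hatop
  · rw [ENNReal.top_rpow_of_pos hp0]
    rw [eq_top_iff]
    calc (⊤:ℝ≥0∞) = ENNReal.ofReal p * volume (Set.Ioi (1:ℝ)) := by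
          simp [Real.volume_Ioi, ENNReal.mul_top, ENNReal.ofReal_eq_zero, not_le.2 hp0]
      _ = ∫⁻ t in Set.Ioi (1:ℝ), ENNReal.ofReal p := by rw [setLIntegral_const]
      _ ≤ ∫⁻ t in Set.Ioi (1:ℝ),
            (if ENNReal.ofReal t < ⊤ then ENNReal.ofReal (p * t ^ (p - 1)) else 0) := by
          apply setLIntegral_mono' measurableSet_Ioi
          intro t ht
          simp only [ENNReal.ofReal_lt_top, if_true]
          apply ENNReal.ofReal_le_ofReal
          nlinarith [Real.one_le_rpow (le_of_lt ht) (by linarith : (0:ℝ) ≤ p - 1)]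
      _ ≤ _ := lintegral_mono_set (Set.Ioi_subset_Ioi zero_le_one)
  -- main case : 0 < a < ⊤
  set A := a.toReal with hA
  have hApos : 0 < A := ENNReal.toReal_pos ha0 hatop
  have hsetcongr : ∫⁻ t in Set.Ioo (0:ℝ) A, ENNReal.ofReal (p * t ^ (p - 1))
      = ∫⁻ t in Set.Ioi (0:ℝ),
        (if ENNReal.ofReal t < a then ENNReal.ofReal (p * t ^ (p - 1)) else 0) := by
    rw [show Set.Ioo (0:ℝ) A = Set.Iio A ∩ Set.Ioi 0 by rw [Set.inter_comm, Set.Ioi_inter_Iio],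
      ← Measure.restrict_restrict measurableSet_Iio, ← lintegral_indicator measurableSet_Iio]
    apply setLIntegral_congr_fun measurableSet_Ioi
    intro t ht
    rw [Set.indicator_apply]
    simp only [Set.mem_Iio]
    have : (t < A) = (ENNReal.ofReal t < a) := by
      rw [eq_iff_iff, ← ENNReal.ofReal_lt_iff_lt_toReal (le_of_lt ht) hatop]
    exact if_congr (iff_of_eq this) rfl rfl
  rw [← hsetcongr]
  have hint : IntegrableOn (fun t : ℝ => p * t ^ (p - 1)) (Set.Ioo 0 A) := by
    have h1 : IntervalIntegrable (fun t : ℝ => t ^ (p - 1)) volume 0 A :=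
      intervalIntegral.intervalIntegrable_rpow' (by linarith)
    rw [intervalIntegrable_iff, Set.uIoc_of_le hApos.le] at h1
    exact ((h1.mono_set Set.Ioo_subset_Ioc_self).const_mul p)
  rw [← ofReal_integral_eq_lintegral_ofReal hint]
  · congr 1
    have h2 : ∫ t in Set.Ioo (0:ℝ) A, p * t ^ (p - 1) = ∫ t in (0:ℝ)..A, p * t ^ (p - 1) := by
      rw [intervalIntegral.integral_of_le hApos.le, integral_Ioc_eq_integral_Ioo]
    rw [h2, intervalIntegral.integral_const_mul, integral_rpow (Or.inl (by linarith))]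
    have : p - 1 + 1 = p := by ring
    rw [this, Real.zero_rpow (ne_of_gt hp0)]
    rw [ENNReal.toReal_rpow]
    have hx : p * (((a ^ p).toReal - 0) / p) = (a ^ p).toReal := by rw [sub_zero]; field_simp
    rw [hx, ENNReal.ofReal_toReal (ENNReal.rpow_ne_top_of_nonneg hp0.le hatop)]
  · rw [Filter.EventuallyLE, ae_restrict_iff' measurableSet_Ioo]
    apply Filter.Eventually.of_forall
    intro t ht
    have h1 := ht.1
    have : (0:ℝ) ≤ t ^ (p-1) := Real.rpow_nonneg h1.le _
    simp only [Pi.zero_apply]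
    positivity



lemma weak {d : ℕ} (ψ : (Fin d → ℝ) → ℝ≥0∞) (hψ : Measurable ψ) (E : Set (Fin d → ℝ))
    (hE : ∀ x ∈ E, ∃ (z : Fin d → ℝ) (ρ : ℝ), 0 < ρ ∧ x ∈ Metric.closedBall z ρ ∧
      volume (Metric.closedBall z ρ) < ∫⁻ y in Metric.closedBall z ρ, ψ y) :
    volume E ≤ 5 ^ d * ∫⁻ y, ψ y := by
  set T := ∫⁻ y, ψ y with hT
  have hresT : ∀ s : Set (Fin d → ℝ), ∫⁻ y in s, ψ y ≤ T := fun s =>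
    (lintegral_mono_set (Set.subset_univ _)).trans (by rw [Measure.restrict_univ])
  rcases eq_or_ne T ⊤ with htop | htop
  · rw [htop, ENNReal.mul_top (by positivity)]
    exact le_top
  rcases Nat.eq_zero_or_pos d with hd | hd
  · subst hd
    have hsub : Subsingleton (Fin 0 → ℝ) := ⟨fun a b => funext fun i => i.elim0⟩
    rcases Set.eq_empty_or_nonempty E with rfl | ⟨x, hx⟩
    · simp
    obtain ⟨z, ρ, hρ, hxball, hlt⟩ := hE x hx
    have hball : Metric.closedBall z ρ = Set.univ := by
      ext y
      simp only [Metric.mem_closedBall, Set.mem_univ, iff_true]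
      rw [Subsingleton.elim y z, dist_self]
      exact hρ.le
    calc volume E ≤ volume (Metric.closedBall z ρ) := by
          rw [hball]; exact measure_mono (Set.subset_univ _)
      _ ≤ ∫⁻ y in Metric.closedBall z ρ, ψ y := hlt.le
      _ ≤ T := hresT _
      _ ≤ 5 ^ 0 * T := by simp
  -- now d ≥ 1
  set t : Set ((Fin d → ℝ) × ℝ) := {a | 0 < a.2 ∧
    volume (Metric.closedBall a.1 a.2) < ∫⁻ y in Metric.closedBall a.1 a.2, ψ y} with ht
  have hR : ∀ a ∈ t, a.2 ≤ max 1 T.toReal := by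
    rintro ⟨z, ρ⟩ ⟨hρ, hlt⟩
    by_contra hgt
    push_neg at hgt
    simp only at hgt hρ hlt
    have h1 : (1:ℝ) ≤ 2 * ρ := by nlinarith [lt_of_le_of_lt (le_max_left 1 T.toReal) hgt]
    have h2 : T.toReal < 2 * ρ := by nlinarith [lt_of_le_of_lt (le_max_right 1 T.toReal) hgt]
    have hvol : volume (Metric.closedBall z ρ) = ENNReal.ofReal ((2*ρ)^d) := by
      rw [Real.volume_pi_closedBall _ (by nlinarith), Fintype.card_fin]
    have hle : ENNReal.ofReal (2*ρ) ≤ ENNReal.ofReal ((2*ρ)^d) := by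
      apply ENNReal.ofReal_le_ofReal
      calc 2*ρ = (2*ρ)^1 := (pow_one _).symm
        _ ≤ (2*ρ)^d := pow_le_pow_right₀ h1 hd
    have hTlt : T < ENNReal.ofReal (2*ρ) := by
      rw [ENNReal.lt_ofReal_iff_toReal_lt htop]; exact h2
    have hvT : volume (Metric.closedBall z ρ) < T := lt_of_lt_of_le hlt (hresT _)
    rw [hvol] at hvT
    exact absurd (lt_trans (lt_of_lt_of_le hTlt hle) hvT) (lt_irrefl _)
  obtain ⟨u, hut, hdisj, hcov⟩ := Vitali.exists_disjoint_subfamily_covering_enlargement_closedBall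
    t Prod.fst Prod.snd (max 1 T.toReal) hR 4 (by norm_num)
  have hucount : u.Countable := by
    apply hdisj.countable_of_nonempty_interior
    intro a ha
    have hρ : 0 < a.2 := (hut ha).1
    exact ⟨a.1, Metric.ball_subset_interior_closedBall (Metric.mem_ball_self hρ)⟩
  -- E covered by 4-enlargements of u
  have hEcov : E ⊆ ⋃ b ∈ u, Metric.closedBall b.1 (4 * b.2) := by
    intro x hx
    obtain ⟨z, ρ, hρ, hxball, hlt⟩ := hE x hx
    obtain ⟨b, hb, hsub⟩ := hcov (z, ρ) ⟨hρ, hlt⟩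
    exact Set.mem_biUnion hb (hsub hxball)
  calc volume E ≤ ∑' b : u, volume (Metric.closedBall b.1.1 (4 * b.1.2)) :=
        (measure_mono hEcov).trans (measure_biUnion_le volume hucount _)
    _ ≤ ∑' b : u, 5^d * volume (Metric.closedBall b.1.1 b.1.2) := by
        apply ENNReal.tsum_le_tsum
        intro b
        have hρ : 0 < b.1.2 := (hut b.2).1
        rw [Real.volume_pi_closedBall _ (by positivity), Real.volume_pi_closedBall _ hρ.le,
          Fintype.card_fin]
        rw [show ((5:ℝ≥0∞)^d) = ENNReal.ofReal ((5:ℝ)^d) by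
          rw [ENNReal.ofReal_pow (by norm_num : (0:ℝ) ≤ 5)]
          norm_num]
        rw [← ENNReal.ofReal_mul (by positivity)]
        apply ENNReal.ofReal_le_ofReal
        calc (2*(4*b.1.2))^d = (8*b.1.2)^d := by ring_nf
          _ ≤ (10*b.1.2)^d := by
              apply pow_le_pow_left₀ (by positivity) (by linarith)
          _ = 5^d * (2*b.1.2)^d := by rw [← mul_pow]; ring_nf
    _ ≤ ∑' b : u, 5^d * ∫⁻ y in Metric.closedBall b.1.1 b.1.2, ψ y := by
        apply ENNReal.tsum_le_tsum
        intro b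
        exact mul_le_mul_right (hut b.2).2.le _
    _ = 5^d * ∑' b : u, ∫⁻ y in Metric.closedBall b.1.1 b.1.2, ψ y := ENNReal.tsum_mul_left
    _ ≤ 5^d * T := by
        apply mul_le_mul_right
        rw [← lintegral_biUnion hucount (fun b _ => Metric.isClosed_closedBall.measurableSet) hdisj ψ]
        exact hresT _



lemma Kfin {p c c₀ : ℝ} {Φ : ℝ → ℝ} (hp : 1 < p) (hc : 0 < c) (hc₀ : 0 < c₀)
    (hmono : MonotoneOn Φ (Set.Ici 0)) (h0 : Φ 0 = 0)
    (hBp : MeasureTheory.IntegrableOn (fun t : ℝ => Φ t / t ^ p / t) (Set.Ioi c)) :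
    ∫⁻ s in Set.Ioi (2 * c₀), ENNReal.ofReal (Φ s / s ^ p / s) < ⊤ := by
  have hphi_nonneg : ∀ t : ℝ, 0 ≤ t → 0 ≤ Φ t := fun t ht => h0 ▸ hmono (Set.mem_Ici.2 le_rfl) ht ht
  have hsplit : Set.Ioi (2*c₀) ⊆ Set.Ioc (2*c₀) c ∪ Set.Ioi c := by
    intro s hs
    rcases le_or_gt s c with h | h
    · exact Or.inl ⟨hs, h⟩
    · exact Or.inr h
  calc ∫⁻ s in Set.Ioi (2*c₀), ENNReal.ofReal (Φ s / s ^ p / s)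
      ≤ ∫⁻ s in Set.Ioc (2*c₀) c ∪ Set.Ioi c, ENNReal.ofReal (Φ s / s ^ p / s) :=
        lintegral_mono_set hsplit
    _ ≤ (∫⁻ s in Set.Ioc (2*c₀) c, ENNReal.ofReal (Φ s / s ^ p / s)) +
        ∫⁻ s in Set.Ioi c, ENNReal.ofReal (Φ s / s ^ p / s) := lintegral_union_le _ _ _
    _ < ⊤ := by
        apply ENNReal.add_lt_top.2
        constructor
        · have hbd : ∀ s ∈ Set.Ioc (2*c₀) c, ENNReal.ofReal (Φ s / s ^ p / s) ≤
              ENNReal.ofReal (Φ c / (2*c₀) ^ p / (2*c₀)) := by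
            intro s hs
            have hs0 : 0 < s := lt_trans (by positivity) hs.1
            apply ENNReal.ofReal_le_ofReal
            have h1 : Φ s ≤ Φ c := hmono (Set.mem_Ici.2 hs0.le) (Set.mem_Ici.2 hc.le) hs.2
            have h2 : (2*c₀) ^ p ≤ s ^ p := Real.rpow_le_rpow (by positivity) hs.1.le (by linarith)
            have h3 : (0:ℝ) < (2*c₀) ^ p := Real.rpow_pos_of_pos (by positivity) p
            have h4 : (0:ℝ) < s ^ p := Real.rpow_pos_of_pos hs0 p
            have h5 : Φ s / s ^ p ≤ Φ c / (2*c₀) ^ p := by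
              apply div_le_div₀ (hphi_nonneg c hc.le) h1 h3 h2
            calc Φ s / s ^ p / s ≤ Φ s / s ^ p / (2*c₀) := by
                  apply div_le_div_of_nonneg_left ?_ (by positivity) hs.1.le
                  exact div_nonneg (hphi_nonneg s hs0.le) h4.le
              _ ≤ Φ c / (2*c₀) ^ p / (2*c₀) := by
                  apply div_le_div_of_nonneg_right h5 (by positivity)
          calc ∫⁻ s in Set.Ioc (2*c₀) c, ENNReal.ofReal (Φ s / s ^ p / s)
              ≤ ∫⁻ _ in Set.Ioc (2*c₀) c, ENNReal.ofReal (Φ c / (2*c₀) ^ p / (2*c₀)) :=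
                setLIntegral_mono' measurableSet_Ioc hbd
            _ = ENNReal.ofReal (Φ c / (2*c₀) ^ p / (2*c₀)) * volume (Set.Ioc (2*c₀) c) :=
                setLIntegral_const _ _
            _ < ⊤ := by
                apply ENNReal.mul_lt_top ENNReal.ofReal_lt_top
                rw [Real.volume_Ioc]
                exact ENNReal.ofReal_lt_top
        · exact hBp.lintegral_lt_top



lemma inner_bound {p c₀ : ℝ} {Φ Φm : ℝ → ℝ} (hp : 1 < p) (hc₀ : 0 < c₀)
    (hmono : MonotoneOn Φ (Set.Ici 0)) (h0 : Φ 0 = 0)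
    (heq : ∀ u : ℝ, 0 ≤ u → Φm u = Φ u)
    (a : ℝ) (ha : 0 ≤ a) :
    ∫⁻ t in Set.Ioi (0:ℝ), ENNReal.ofReal (p * t ^ (p-1)) *
        (if t * c₀ < a then ENNReal.ofReal (Φm (2 * a / t)) else 0)
      ≤ ENNReal.ofReal (p * (2 ^ p * a ^ p)) *
        ∫⁻ s in Set.Ioi (2 * c₀), ENNReal.ofReal (Φ s / s ^ p / s) := by
  rcases eq_or_lt_of_le ha with rfl | ha
  · have : ∀ t ∈ Set.Ioi (0:ℝ), ENNReal.ofReal (p * t ^ (p-1)) *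
        (if t * c₀ < 0 then ENNReal.ofReal (Φm (2 * 0 / t)) else 0) = 0 := by
      intro t ht
      simp only [Set.mem_Ioi] at ht
      rw [if_neg (by push_neg; positivity), mul_zero]
    rw [setLIntegral_congr_fun measurableSet_Ioi this]
    simp
  -- a > 0
  have h2a : (0:ℝ) < 2 * a := by linarith
  -- rewrite as integral over Ioo 0 (a / c₀)
  have hstep1 : ∫⁻ t in Set.Ioi (0:ℝ), ENNReal.ofReal (p * t ^ (p-1)) *
        (if t * c₀ < a then ENNReal.ofReal (Φm (2 * a / t)) else 0)
      = ∫⁻ t in Set.Ioo (0:ℝ) (a / c₀),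
          ENNReal.ofReal (p * t ^ (p-1)) * ENNReal.ofReal (Φm (2 * a / t)) := by
    rw [show Set.Ioo (0:ℝ) (a / c₀) = Set.Iio (a / c₀) ∩ Set.Ioi 0 by
        rw [Set.inter_comm, Set.Ioi_inter_Iio],
      ← Measure.restrict_restrict measurableSet_Iio, ← lintegral_indicator measurableSet_Iio]
    apply setLIntegral_congr_fun measurableSet_Ioi
    intro t ht
    rw [Set.indicator_apply]
    simp only [Set.mem_Iio]
    by_cases h : t * c₀ < a
    · rw [if_pos h, if_pos ((lt_div_iff₀ hc₀).2 h)]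
    · rw [if_neg h, mul_zero, if_neg (fun hh => h ((lt_div_iff₀ hc₀).1 hh))]
  rw [hstep1]
  -- change of variables s ↦ 2a/s
  have himg : Set.Ioo (0:ℝ) (a / c₀) = (fun s : ℝ => 2 * a / s) '' Set.Ioi (2 * c₀) := by
    ext t
    constructor
    · rintro ⟨ht0, htc⟩
      refine ⟨2 * a / t, ?_, ?_⟩
      · simp only [Set.mem_Ioi]
        rw [lt_div_iff₀ ht0]
        calc 2 * c₀ * t = 2 * (t * c₀) := by ring
          _ < 2 * a := by linarith [(lt_div_iff₀ hc₀).1 htc]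
      · field_simp
    · rintro ⟨s, hs, rfl⟩
      simp only [Set.mem_Ioi] at hs
      have hs0 : 0 < s := lt_trans (by positivity) hs
      constructor
      · positivity
      · rw [div_lt_div_iff₀ hs0 hc₀]
        nlinarith
  rw [himg]
  have hderiv : ∀ s ∈ Set.Ioi (2 * c₀), HasFDerivWithinAt (fun s : ℝ => 2 * a / s)
      ((1 : ℝ →L[ℝ] ℝ).smulRight (-(2*a) / s^2)) (Set.Ioi (2 * c₀)) s := by
    intro s hs
    have hs0 : s ≠ 0 := by
      have : 0 < s := lt_trans (by positivity) hs
      exact this.ne'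
    have h1 : HasDerivAt (fun s : ℝ => 2 * a / s) (-(2*a) / s^2) s := by
      have h2 := (hasDerivAt_inv hs0).const_mul (2*a)
      convert h2 using 1
      all_goals first
        | ring
        | (funext u; rw [div_eq_mul_inv])
        | rfl
    exact (h1.hasDerivWithinAt).hasFDerivWithinAt
  have hinj : Set.InjOn (fun s : ℝ => 2 * a / s) (Set.Ioi (2 * c₀)) := by
    intro s1 h1 s2 h2 he
    simp only at he
    have hs1 : (0:ℝ) < s1 := lt_trans (by positivity) h1
    have hs2 : (0:ℝ) < s2 := lt_trans (by positivity) h2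
    rw [div_eq_div_iff hs1.ne' hs2.ne'] at he
    exact mul_left_cancel₀ h2a.ne' (by linarith)
  rw [MeasureTheory.lintegral_image_eq_lintegral_abs_det_fderiv_mul volume
    measurableSet_Ioi hderiv hinj]
  -- pointwise identity on Ioi (2c₀)
  have hpoint : ∀ s ∈ Set.Ioi (2 * c₀),
      ENNReal.ofReal |((1 : ℝ →L[ℝ] ℝ).smulRight (-(2*a) / s^2)).det| *
        (ENNReal.ofReal (p * (2 * a / s) ^ (p-1)) *
          ENNReal.ofReal (Φm (2 * a / (2 * a / s))))
      = ENNReal.ofReal (p * (2 ^ p * a ^ p)) * ENNReal.ofReal (Φ s / s ^ p / s) := by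
    intro s hs
    have hs0 : (0:ℝ) < s := lt_trans (by positivity) hs
    have harg : 2 * a / (2 * a / s) = s := by field_simp
    rw [ContinuousLinearMap.smulRight_one_eq_toSpanSingleton, ContinuousLinearMap.det_toSpanSingleton, harg, heq s hs0.le]
    rw [abs_div, abs_neg, abs_of_nonneg h2a.le, abs_of_nonneg (by positivity : (0:ℝ) ≤ s^2)]
    rw [← ENNReal.ofReal_mul (by positivity), ← ENNReal.ofReal_mul (by positivity)]
    have hΦs : 0 ≤ Φ s := h0 ▸ hmono (Set.mem_Ici.2 le_rfl) (Set.mem_Ici.2 hs0.le) hs0.le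
    rw [← ENNReal.ofReal_mul (by positivity)]
    congr 1
    -- real identity
    have e0 : (2*a) ^ p = 2 ^ p * a ^ p := Real.mul_rpow (by norm_num) ha.le
    have e1 : (2*a) ^ p = (2*a) ^ (p-1) * (2*a) := by
      rw [← Real.rpow_add_one h2a.ne' (p-1)]
      norm_num
    have e2 : s ^ p = s ^ (p-1) * s := by
      rw [← Real.rpow_add_one hs0.ne' (p-1)]
      norm_num
    have e3 : (2 * a / s) ^ (p-1) = (2*a) ^ (p-1) / s ^ (p-1) := Real.div_rpow h2a.le hs0.le (p-1)
    rw [e3, ← e0, e1, e2]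
    have hsp1 : (0:ℝ) < s ^ (p-1) := Real.rpow_pos_of_pos hs0 _
    field_simp
  rw [setLIntegral_congr_fun measurableSet_Ioi hpoint]
  rw [lintegral_const_mul' _ _ ENNReal.ofReal_ne_top]

noncomputable def orliczMaximal' {d : ℕ} (Φ : ℝ → ℝ) (f : (Fin d → ℝ) → ℝ)
    (x : Fin d → ℝ) : ℝ≥0∞ :=
  ⨆ Q : {Q : Set (Fin d → ℝ) // (∃ (z : Fin d → ℝ) (r : ℝ), 0 < r ∧ Q = cubeSet z r) ∧ x ∈ Q},
    luxNorm ((volume Q.1)⁻¹ • volume.restrict Q.1) Φ f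

section Main
variable {d : ℕ} {Φ : ℝ → ℝ} {f : (Fin d → ℝ) → ℝ}

lemma vol_cube_ne_zero {z : Fin d → ℝ} {r : ℝ} (hr : 0 < r) : volume (cubeSet z r) ≠ 0 := by
  rw [volume_cube z hr.le]
  simp only [ne_eq, ENNReal.ofReal_eq_zero, not_le]
  positivity

lemma vol_cube_ne_top {z : Fin d → ℝ} {r : ℝ} (hr : 0 < r) : volume (cubeSet z r) ≠ ⊤ :=
  (volume_cube z hr.le) ▸ ENNReal.ofReal_ne_top

lemma luxlt {Q : Set (Fin d → ℝ)} (h0 : volume Q ≠ 0) (ht : volume Q ≠ ⊤) {l : ℝ} (hl : 0 < l)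
    (h : ENNReal.ofReal l < luxNorm ((volume Q)⁻¹ • volume.restrict Q) Φ f) :
    volume Q < ∫⁻ y in Q, ENNReal.ofReal (Φ (|f y| / l)) := by
  by_contra hcon
  push_neg at hcon
  apply absurd h
  apply not_lt_of_ge
  apply luxA _ _ _ hl
  rw [lintegral_smul_measure]
  calc (volume Q)⁻¹ * ∫⁻ y in Q, ENNReal.ofReal (Φ (|f y| / l))
      ≤ (volume Q)⁻¹ * volume Q := mul_le_mul_right hcon _
    _ = 1 := ENNReal.inv_mul_cancel h0 ht

lemma luxge (hmono : MonotoneOn Φ (Set.Ici 0)) {Q : Set (Fin d → ℝ)} (h0 : volume Q ≠ 0)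
    (ht : volume Q ≠ ⊤) {l : ℝ} (hl : 0 < l)
    (h : volume Q < ∫⁻ y in Q, ENNReal.ofReal (Φ (|f y| / l))) :
    ENNReal.ofReal l ≤ luxNorm ((volume Q)⁻¹ • volume.restrict Q) Φ f := by
  apply luxB _ _ _ hmono hl
  rw [lintegral_smul_measure]
  have h1 : (1:ℝ≥0∞) = (volume Q)⁻¹ * volume Q := (ENNReal.inv_mul_cancel h0 ht).symm
  rw [h1]
  exact ENNReal.mul_lt_mul_right (a := (volume Q)⁻¹) (by simp [ht]) (by simp [h0]) h

lemma rat_cube {z : Fin d → ℝ} {r : ℝ} (hr : 0 < r) {I : ℝ≥0∞}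
    (hI : ENNReal.ofReal (r ^ d) < I) :
    ∃ q : (Fin d → ℚ) × ℚ, 0 < ((q.2 : ℝ)) ∧
      cubeSet z r ⊆ cubeSet (fun i => (q.1 i : ℝ)) (q.2 : ℝ) ∧
      ENNReal.ofReal (((q.2 : ℝ)) ^ d) < I := by
  obtain ⟨ε, hε, hεlt⟩ : ∃ ε > 0, ENNReal.ofReal ((r + 2*ε) ^ d) < I := by
    rcases eq_or_ne I ⊤ with rfl | hItop
    · exact ⟨1, one_pos, ENNReal.ofReal_lt_top⟩
    · have hIR : r ^ d < I.toReal := by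
        rw [← ENNReal.ofReal_lt_iff_lt_toReal (by positivity) hItop]
        exact hI
      have hcont : Filter.Tendsto (fun ε : ℝ => (r + 2*ε) ^ d) (nhds 0) (nhds (r ^ d)) := by
        have hco : Continuous (fun ε : ℝ => (r + 2*ε) ^ d) := by continuity
        have := hco.tendsto 0
        simpa using this
      have hev : ∀ᶠ ε in nhds (0:ℝ), (r + 2*ε) ^ d < I.toReal :=
        hcont.eventually_lt_const hIR
      have hev' : ∀ᶠ ε in nhdsWithin (0:ℝ) (Set.Ioi 0), (r + 2*ε) ^ d < I.toReal :=
        hev.filter_mono nhdsWithin_le_nhds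
      obtain ⟨ε, h1, h2⟩ := (hev'.and self_mem_nhdsWithin).exists
      refine ⟨ε, h2, ?_⟩
      rw [ENNReal.ofReal_lt_iff_lt_toReal (by positivity) hItop]
      exact h1
  have hq : ∀ i, ∃ q : ℚ, z i - ε < (q:ℝ) ∧ (q:ℝ) < z i := fun i => exists_rat_btwn (by linarith)
  choose q hq1 hq2 using hq
  obtain ⟨r', hr1', hr2'⟩ := exists_rat_btwn (show r + ε < r + 2*ε by linarith)
  refine ⟨(q, r'), by linarith, ?_, ?_⟩
  · intro y hy
    intro i
    have h1 := (hy i).1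
    have h2 := (hy i).2
    constructor
    · linarith [hq2 i]
    · linarith [hq1 i, hq2 i]
  · apply lt_of_le_of_lt _ hεlt
    apply ENNReal.ofReal_le_ofReal
    apply pow_le_pow_left₀ (by linarith) (by linarith)

lemma cube_exists_of_lt (hmono : MonotoneOn Φ (Set.Ici 0)) {l : ℝ} (hl : 0 < l)
    {x : Fin d → ℝ} (hx : ENNReal.ofReal l < orliczMaximal' Φ f x) :
    ∃ (z : Fin d → ℝ) (r : ℝ), 0 < r ∧ x ∈ cubeSet z r ∧
      volume (cubeSet z r) < ∫⁻ y in cubeSet z r, ENNReal.ofReal (Φ (|f y| / l)) := by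
  rw [orliczMaximal', lt_iSup_iff] at hx
  obtain ⟨⟨Q, ⟨⟨z, r, hr, rfl⟩, hxQ⟩⟩, hlt⟩ := hx
  exact ⟨z, r, hr, hxQ, luxlt (vol_cube_ne_zero hr) (vol_cube_ne_top hr) hl hlt⟩

lemma orlicz_meas (hmono : MonotoneOn Φ (Set.Ici 0)) :
    Measurable (orliczMaximal' Φ f) := by
  classical
  set N : (Fin d → ℝ) → ℝ≥0∞ := fun x => ⨆ q : (Fin d → ℚ) × ℚ,
    if 0 < ((q.2 : ℝ)) ∧ x ∈ cubeSet (fun i => (q.1 i : ℝ)) (q.2 : ℝ) then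
      luxNorm ((volume (cubeSet (fun i => (q.1 i : ℝ)) (q.2 : ℝ)))⁻¹ •
        volume.restrict (cubeSet (fun i => (q.1 i : ℝ)) (q.2 : ℝ))) Φ f else 0 with hN
  have hNmeas : Measurable N := by
    apply Measurable.iSup
    intro q
    by_cases hq : 0 < ((q.2 : ℝ))
    · have hms : MeasurableSet {x : Fin d → ℝ |
          0 < ((q.2 : ℝ)) ∧ x ∈ cubeSet (fun i => (q.1 i : ℝ)) (q.2 : ℝ)} := by
        have : {x : Fin d → ℝ | 0 < ((q.2 : ℝ)) ∧
            x ∈ cubeSet (fun i => (q.1 i : ℝ)) (q.2 : ℝ)} =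
            cubeSet (fun i => (q.1 i : ℝ)) (q.2 : ℝ) := by
          ext y; simp [hq]
        rw [this, cube_eq_closedBall _ hq.le]
        exact Metric.isClosed_closedBall.measurableSet
      exact Measurable.ite hms measurable_const measurable_const
    · have : (fun x : Fin d → ℝ =>
          if 0 < ((q.2 : ℝ)) ∧ x ∈ cubeSet (fun i => (q.1 i : ℝ)) (q.2 : ℝ) then
            luxNorm ((volume (cubeSet (fun i => (q.1 i : ℝ)) (q.2 : ℝ)))⁻¹ •
              volume.restrict (cubeSet (fun i => (q.1 i : ℝ)) (q.2 : ℝ))) Φ f else 0)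
          = fun _ => 0 := by
        funext y
        rw [if_neg (fun hcon => hq hcon.1)]
      rw [this]
      exact measurable_const
  have hNM : N = orliczMaximal' Φ f := by
    funext x
    apply le_antisymm
    · apply iSup_le
      intro q
      by_cases hq : 0 < ((q.2 : ℝ)) ∧ x ∈ cubeSet (fun i => (q.1 i : ℝ)) (q.2 : ℝ)
      · rw [if_pos hq]
        exact le_iSup_of_le ⟨cubeSet (fun i => (q.1 i : ℝ)) (q.2 : ℝ),
          ⟨(fun i => (q.1 i : ℝ)), (q.2 : ℝ), hq.1, rfl⟩, hq.2⟩ le_rfl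
      · rw [if_neg hq]
        exact zero_le
    · by_contra hcon
      push_neg at hcon
      obtain ⟨r0, hr0nn, hgt1, hgt2⟩ := ENNReal.lt_iff_exists_real_btwn.1 hcon
      have hr0 : 0 < r0 := by
        rcases eq_or_lt_of_le hr0nn with rfl | h
        · exfalso
          simp only [ENNReal.ofReal_zero] at hgt1
          exact absurd hgt1 (by simp)
        · exact h
      obtain ⟨z, r, hr, hxQ, hI⟩ := cube_exists_of_lt hmono hr0 hgt2
      rw [volume_cube z hr.le] at hI
      obtain ⟨q, hq2, hsub, hvol⟩ := rat_cube hr hI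
      have hI2 : volume (cubeSet (fun i => (q.1 i : ℝ)) (q.2 : ℝ)) <
          ∫⁻ y in cubeSet (fun i => (q.1 i : ℝ)) (q.2 : ℝ), ENNReal.ofReal (Φ (|f y| / r0)) := by
        rw [volume_cube _ hq2.le]
        exact lt_of_lt_of_le hvol (lintegral_mono_set hsub)
      have hge := luxge hmono (vol_cube_ne_zero hq2) (vol_cube_ne_top hq2) hr0 hI2
      have hNge : ENNReal.ofReal r0 ≤ N x := by
        rw [hN]
        refine le_trans ?_ (le_iSup _ q)
        rw [if_pos ⟨hq2, hsub hxQ⟩]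
        exact hge
      exact absurd (lt_of_le_of_lt hNge hgt1) (lt_irrefl _)
  rw [← hNM]
  exact hNmeas

end Main

lemma orlicz_eq {d : ℕ} {Φ : ℝ → ℝ} {f : (Fin d → ℝ) → ℝ} :
    orliczMaximal Φ f = orliczMaximal' Φ f := rfl

end OrliczAux

open OrliczAux in
theorem stmt15 (d : ℕ) (p c : ℝ) (hp : 1 < p) (hc : 0 < c) (Φ : ℝ → ℝ)
    (hconv : ConvexOn ℝ (Set.Ici 0) Φ) (hmono : MonotoneOn Φ (Set.Ici 0))
    (h0 : Φ 0 = 0) (htop : Filter.Tendsto Φ Filter.atTop Filter.atTop)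
    (hBp : MeasureTheory.IntegrableOn (fun t : ℝ => Φ t / t ^ p / t) (Set.Ioi c)) :
    ∃ C : ℝ≥0∞, C ≠ ⊤ ∧
      ∀ f : (Fin d → ℝ) → ℝ, Measurable f →
        ∫⁻ x, orliczMaximal Φ f x ^ p ≤ C * ∫⁻ x, ENNReal.ofReal (|f x|) ^ p := by
  classical
  obtain ⟨c₀, hc₀, hΦc₀⟩ := exists_small hconv hmono h0
  set Φm : ℝ → ℝ := fun u => Φ (max u 0) with hΦmdef
  have hΦm_mono : Monotone Φm := fun u v huv =>
    hmono (Set.mem_Ici.2 (le_max_right u 0)) (Set.mem_Ici.2 (le_max_right v 0))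
      (max_le_max huv le_rfl)
  have hΦm_meas : Measurable Φm := hΦm_mono.measurable
  have heq : ∀ u : ℝ, 0 ≤ u → Φm u = Φ u := by
    intro u hu
    rw [hΦmdef]
    simp only [max_eq_left hu]
  set K' := ∫⁻ s in Set.Ioi (2 * c₀), ENNReal.ofReal (Φ s / s ^ p / s) with hK'
  have hK'lt : K' < ⊤ := Kfin hp hc hc₀ hmono h0 hBp
  refine ⟨5 ^ d * (ENNReal.ofReal (p * 2 ^ p) * K'), ?_, ?_⟩
  · apply ENNReal.mul_ne_top
    · exact ENNReal.pow_ne_top (by norm_num)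
    · exact ENNReal.mul_ne_top ENNReal.ofReal_ne_top hK'lt.ne
  intro f hf
  set M := orliczMaximal Φ f with hM
  have hMM : M = orliczMaximal' Φ f := orlicz_eq
  have hMmeas : Measurable M := by rw [hMM]; exact orlicz_meas hmono
  set ψ : ℝ → (Fin d → ℝ) → ℝ≥0∞ := fun t x =>
    if t * c₀ < |f x| then ENNReal.ofReal (Φm (2 * |f x| / t)) else 0 with hψdef
  have hψm : ∀ t, Measurable (ψ t) := by
    intro t
    apply Measurable.ite
    · exact measurableSet_lt measurable_const hf.abs
    · exact (hΦm_meas.comp ((hf.abs.const_mul 2).div_const t)).ennreal_ofReal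
    · exact measurable_const
  -- weak type bound
  have hweak : ∀ t : ℝ, 0 < t →
      volume {x | ENNReal.ofReal t < M x} ≤ 5 ^ d * ∫⁻ y, ψ t y := by
    intro t ht
    apply weak (ψ t) (hψm t)
    intro x hx
    obtain ⟨z, r, hr, hxQ, hI⟩ := cube_exists_of_lt hmono ht (hMM ▸ hx)
    have hpoint : ∀ y : Fin d → ℝ, ENNReal.ofReal (Φ (|f y| / t)) ≤
        ENNReal.ofReal (1/2) + ENNReal.ofReal (1/2) * ψ t y := by
      intro y
      by_cases hy : t * c₀ < |f y|
      · rw [hψdef]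
        simp only
        rw [if_pos hy]
        have h1 : Φ (|f y| / t) ≤ Φ (2 * (|f y| / t)) / 2 :=
          phi_half hconv h0 _ (by positivity)
        have h2 : 2 * (|f y| / t) = 2 * |f y| / t := by ring
        rw [h2] at h1
        have h3 : Φm (2 * |f y| / t) = Φ (2 * |f y| / t) := heq _ (by positivity)
        rw [h3, ← ENNReal.ofReal_mul (by norm_num : (0:ℝ) ≤ 1/2)]
        calc ENNReal.ofReal (Φ (|f y| / t)) ≤ ENNReal.ofReal (1/2 * Φ (2 * |f y| / t)) := by
              apply ENNReal.ofReal_le_ofReal; linarith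
          _ ≤ ENNReal.ofReal (1/2) + ENNReal.ofReal (1/2 * Φ (2 * |f y| / t)) := le_add_self
      · rw [hψdef]
        simp only
        rw [if_neg hy, mul_zero, add_zero]
        apply ENNReal.ofReal_le_ofReal
        push_neg at hy
        have harg : |f y| / t ≤ c₀ := by
          rw [div_le_iff₀ ht]
          linarith [hy]
        calc Φ (|f y| / t) ≤ Φ c₀ :=
              hmono (Set.mem_Ici.2 (by positivity)) (Set.mem_Ici.2 hc₀.le) harg
          _ ≤ 1/2 := hΦc₀
    have hIle : ∫⁻ y in cubeSet z r, ENNReal.ofReal (Φ (|f y| / t)) ≤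
        ENNReal.ofReal (1/2) * volume (cubeSet z r) +
          ENNReal.ofReal (1/2) * ∫⁻ y in cubeSet z r, ψ t y := by
      calc ∫⁻ y in cubeSet z r, ENNReal.ofReal (Φ (|f y| / t))
          ≤ ∫⁻ y in cubeSet z r, (ENNReal.ofReal (1/2) + ENNReal.ofReal (1/2) * ψ t y) :=
            lintegral_mono fun y => hpoint y
        _ = ENNReal.ofReal (1/2) * volume (cubeSet z r) +
            ENNReal.ofReal (1/2) * ∫⁻ y in cubeSet z r, ψ t y := by
            rw [lintegral_add_left measurable_const, setLIntegral_const,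
              lintegral_const_mul' _ _ ENNReal.ofReal_ne_top]
    have hvolψ : volume (cubeSet z r) < ∫⁻ y in cubeSet z r, ψ t y := by
      by_contra hcon
      push_neg at hcon
      have : ∫⁻ y in cubeSet z r, ENNReal.ofReal (Φ (|f y| / t)) ≤ volume (cubeSet z r) := by
        calc ∫⁻ y in cubeSet z r, ENNReal.ofReal (Φ (|f y| / t))
            ≤ ENNReal.ofReal (1/2) * volume (cubeSet z r) +
              ENNReal.ofReal (1/2) * ∫⁻ y in cubeSet z r, ψ t y := hIle
          _ ≤ ENNReal.ofReal (1/2) * volume (cubeSet z r) +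
              ENNReal.ofReal (1/2) * volume (cubeSet z r) := by
              exact add_le_add_right (mul_le_mul_right hcon _) _
          _ = (ENNReal.ofReal (1/2) + ENNReal.ofReal (1/2)) * volume (cubeSet z r) :=
              (add_mul _ _ _).symm
          _ = volume (cubeSet z r) := by
              rw [← ENNReal.ofReal_add (by norm_num) (by norm_num)]
              norm_num
      exact absurd (lt_of_lt_of_le hI this) (lt_irrefl _)
    refine ⟨fun i => z i + r / 2, r / 2, by positivity, ?_, ?_⟩
    · rw [← cube_eq_closedBall z hr.le]
      exact hxQ
    · rw [← cube_eq_closedBall z hr.le]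
      exact hvolψ
  -- layer cake and assembly
  have swap1 : ∫⁻ x, ∫⁻ t in Set.Ioi (0:ℝ),
        (if ENNReal.ofReal t < M x then ENNReal.ofReal (p * t ^ (p - 1)) else 0) ∂volume
      = ∫⁻ t in Set.Ioi (0:ℝ), ∫⁻ x,
        (if ENNReal.ofReal t < M x then ENNReal.ofReal (p * t ^ (p - 1)) else 0) ∂volume := by
    apply lintegral_lintegral_swap
    apply Measurable.aemeasurable
    apply Measurable.ite
    · exact measurableSet_lt (ENNReal.measurable_ofReal.comp measurable_snd)
        (hMmeas.comp measurable_fst)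
    · exact ((measurable_snd.pow_const (p-1) |>.const_mul p).ennreal_ofReal)
    · exact measurable_const
  have swap2 : ∫⁻ t in Set.Ioi (0:ℝ), ∫⁻ x, ENNReal.ofReal (p * t ^ (p - 1)) * ψ t x ∂volume
      = ∫⁻ x, ∫⁻ t in Set.Ioi (0:ℝ), ENNReal.ofReal (p * t ^ (p - 1)) * ψ t x ∂volume := by
    apply lintegral_lintegral_swap
    apply Measurable.aemeasurable
    apply Measurable.mul
    · fun_prop
    · rw [hψdef]
      apply Measurable.ite
      · exact measurableSet_lt (measurable_fst.mul_const c₀) ((hf.comp measurable_snd).abs)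
      · apply Measurable.ennreal_ofReal
        apply hΦm_meas.comp
        exact Measurable.div (((hf.comp measurable_snd).abs).const_mul 2) measurable_fst
      · exact measurable_const
  calc ∫⁻ x, M x ^ p
      = ∫⁻ x, ∫⁻ t in Set.Ioi (0:ℝ),
          (if ENNReal.ofReal t < M x then ENNReal.ofReal (p * t ^ (p - 1)) else 0) ∂volume :=
        lintegral_congr fun x => (claimA hp (M x)).symm
    _ = ∫⁻ t in Set.Ioi (0:ℝ), ∫⁻ x,
          (if ENNReal.ofReal t < M x then ENNReal.ofReal (p * t ^ (p - 1)) else 0) ∂volume :=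
        swap1
    _ = ∫⁻ t in Set.Ioi (0:ℝ),
          ENNReal.ofReal (p * t ^ (p - 1)) * volume {x | ENNReal.ofReal t < M x} := by
        apply lintegral_congr
        intro t
        have hrw : ∀ x : Fin d → ℝ,
            (if ENNReal.ofReal t < M x then ENNReal.ofReal (p * t ^ (p - 1)) else 0)
            = Set.indicator {x | ENNReal.ofReal t < M x}
                (fun _ => ENNReal.ofReal (p * t ^ (p - 1))) x := by
          intro x
          rw [Set.indicator_apply]
          rfl
        rw [lintegral_congr hrw, lintegral_indicator
          (measurableSet_lt measurable_const hMmeas), setLIntegral_const]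
    _ ≤ ∫⁻ t in Set.Ioi (0:ℝ),
          ENNReal.ofReal (p * t ^ (p - 1)) * (5 ^ d * ∫⁻ x, ψ t x) := by
        apply setLIntegral_mono' measurableSet_Ioi
        intro t ht
        exact mul_le_mul_right (hweak t ht) _
    _ = 5 ^ d * ∫⁻ t in Set.Ioi (0:ℝ), ∫⁻ x, ENNReal.ofReal (p * t ^ (p - 1)) * ψ t x := by
        rw [← lintegral_const_mul' (5^d : ℝ≥0∞) _ (ENNReal.pow_ne_top (by norm_num))]
        apply lintegral_congr
        intro t
        rw [lintegral_const_mul' _ _ ENNReal.ofReal_ne_top]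
        exact mul_left_comm _ _ _
    _ = 5 ^ d * ∫⁻ x, ∫⁻ t in Set.Ioi (0:ℝ), ENNReal.ofReal (p * t ^ (p - 1)) * ψ t x := by
        rw [swap2]
    _ ≤ 5 ^ d * ∫⁻ x, ENNReal.ofReal (p * (2 ^ p * |f x| ^ p)) * K' := by
        apply mul_le_mul_right
        apply lintegral_mono
        intro x
        exact inner_bound hp hc₀ hmono h0 heq (|f x|) (abs_nonneg _)
    _ = 5 ^ d * (ENNReal.ofReal (p * 2 ^ p) * K') * ∫⁻ x, ENNReal.ofReal |f x| ^ p := by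
        rw [mul_assoc, ← lintegral_const_mul' (ENNReal.ofReal (p * 2^p) * K')
          _ (ENNReal.mul_ne_top ENNReal.ofReal_ne_top hK'lt.ne)]
        congr 1
        apply lintegral_congr
        intro x
        have e : ENNReal.ofReal (p * (2 ^ p * |f x| ^ p))
            = ENNReal.ofReal (p * 2 ^ p) * ENNReal.ofReal |f x| ^ p := by
          rw [ENNReal.ofReal_rpow_of_nonneg (abs_nonneg _) (by linarith : (0:ℝ) ≤ p),
            ← ENNReal.ofReal_mul (by positivity)]
          congr 1
          ring
        rw [e]
        ring
end

section
/- Duality transference of testing conditions: let u, σ be weights on ℝ, and T a linear operator with formal adjoint property ∫ T(fσ)·g·u dx = ∫ f·T*(gu)·σ dx. If T(·σ): L^2(σ) → L^{2,∞}(u) is bounded with norm N, then for every cube Q, ∫_Q |T*(χ_Q u)|^2 σ dx ≤ C·N^2·u(Q), where C is an absolute constant. -/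
open Real MeasureTheory ENNReal

lemma sqrt_sq' (x : ℝ≥0∞) : (x ^ ((1:ℝ)/2)) ^ 2 = x := by
  rw [← ENNReal.rpow_natCast (x ^ ((1:ℝ)/2)) 2, ← ENNReal.rpow_mul]
  norm_num

lemma tail_int {c : ℝ} (hc : 0 < c) :
    ∫⁻ t in Set.Ioi c, ENNReal.ofReal (t ^ (-2:ℝ)) = ENNReal.ofReal c⁻¹ := by
  rw [← ofReal_integral_eq_lintegral_ofReal (integrableOn_Ioi_rpow_of_lt (by norm_num) hc)
      ((ae_restrict_iff' measurableSet_Ioi).2 (Filter.Eventually.of_forall fun t ht =>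
        Real.rpow_nonneg (le_of_lt (hc.trans ht)) _))]
  rw [integral_Ioi_rpow_of_lt (by norm_num) hc]
  rw [show (-2 : ℝ) + 1 = -1 by norm_num, Real.rpow_neg_one]
  norm_num

lemma ofReal_max_zero' (r : ℝ) : ENNReal.ofReal (max r 0) = ENNReal.ofReal r := by
  rcases le_total r 0 with h | h
  · simp [ENNReal.ofReal_of_nonpos h, max_eq_right h]
  · rw [max_eq_left h]

theorem stmt19 :
    ∃ C : ℝ≥0∞, C ≠ 0 ∧ C ≠ ⊤ ∧
      ∀ (u σ : ℝ → ℝ), Measurable u → Measurable σ →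
        (∀ x, 0 ≤ u x) → (∀ x, 0 ≤ σ x) →
        ∀ (T Tstar : (ℝ → ℝ) → (ℝ → ℝ)) (N : ℝ≥0∞),
        (∀ f g : ℝ → ℝ,
          ∫ x, T (fun y => f y * σ y) x * g x * u x =
            ∫ x, f x * Tstar (fun y => g y * u y) x * σ x) →
        (∀ (f : ℝ → ℝ) (t : ℝ), 0 < t →
          ENNReal.ofReal t *
              (volume.withDensity (fun x => ENNReal.ofReal (u x))
                  {x | t < |T (fun y => f y * σ y) x|}) ^ ((1 : ℝ) / 2) ≤
            N * (∫⁻ x, ENNReal.ofReal (f x ^ 2 * σ x)) ^ ((1 : ℝ) / 2)) →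
        ∀ a b : ℝ, a < b →
          ∫⁻ x in Set.Icc a b,
              ENNReal.ofReal
                ((Tstar (fun y => Set.indicator (Set.Icc a b) u y) x) ^ 2 * σ x) ≤
            C * N ^ 2 * ∫⁻ x in Set.Icc a b, ENNReal.ofReal (u x) := by
  refine ⟨4, by norm_num, by norm_num, ?_⟩
  intro u σ hu hσm hu0 hσ0 T Tstar N hadj hweak a b hab
  set w : ℝ → ℝ≥0∞ := fun x => ENNReal.ofReal (u x) with hwdef
  set ν : Measure ℝ := volume.withDensity w with hνdef
  set Q : Set ℝ := Set.Icc a b with hQdef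
  set h : ℝ → ℝ := Tstar (fun y => Set.indicator Q u y) with hhdef
  have hQmeas : MeasurableSet Q := measurableSet_Icc
  set νQ := ∫⁻ x in Q, ENNReal.ofReal (u x) with hνQdef
  have hνQ : ν Q = νQ := by
    rw [hνdef, withDensity_apply _ hQmeas, hνQdef]
  rw [← lintegral_indicator hQmeas]
  set F : ℝ → ℝ≥0∞ := Q.indicator (fun x => ENNReal.ofReal (h x ^ 2 * σ x)) with hFdef
  rw [lintegral_def]
  refine iSup_le fun φ => iSup_le fun hφ => ?_
  rw [← SimpleFunc.lintegral_eq_lintegral]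
  -- φ is everywhere finite
  have hFlt : ∀ x, F x ≠ ⊤ := by
    intro x
    rw [hFdef]
    by_cases hx : x ∈ Q <;> simp [Set.indicator, hx]
  have hφtop : ∀ x, φ x ≠ ⊤ := fun x => ne_top_of_le_ne_top (hFlt x) (hφ x)
  -- φ is bounded
  set c : ℝ≥0∞ := φ.range.sup id with hcdef
  have hφc : ∀ x, φ x ≤ c := fun x => Finset.le_sup (f := id) (φ.mem_range_self x)
  have hctop : c ≠ ⊤ := by
    rw [hcdef]
    refine ((Finset.sup_lt_iff (by simp [lt_top_iff_ne_top] : (⊥:ℝ≥0∞) < ⊤)).2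
      (fun y hy => ?_)).ne
    obtain ⟨x, rfl⟩ := SimpleFunc.mem_range.mp hy
    exact (hφtop x).lt_top
  set A := ∫⁻ x, φ x ∂volume with hAdef
  have hAtop : A ≠ ⊤ := by
    have hle : ∀ x, φ x ≤ Q.indicator (fun _ => c) x := by
      intro x
      by_cases hx : x ∈ Q
      · simpa [Set.indicator, hx] using hφc x
      · have hF0 : F x = 0 := by simp [hFdef, Set.indicator, hx]
        simpa [Set.indicator, hx] using (hφ x).trans_eq hF0
    refine ne_top_of_le_ne_top ?_ (lintegral_mono hle)
    rw [lintegral_indicator hQmeas, setLIntegral_const]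
    exact ENNReal.mul_ne_top hctop (by simp [hQdef, Real.volume_Icc])
  -- test function
  set f : ℝ → ℝ := fun x => if h x * σ x = 0 then 0 else (φ x).toReal / (h x * σ x)
    with hfdef
  have hφF : ∀ x, φ x ≤ ENNReal.ofReal (h x ^ 2 * σ x) := fun x =>
    (hφ x).trans (Set.indicator_le_self _ _ x)
  have claim1 : ∀ x, f x * h x * σ x = (φ x).toReal := by
    intro x
    by_cases hx : h x * σ x = 0
    · have hφ0 : φ x = 0 := by
        have h0 : ENNReal.ofReal (h x ^ 2 * σ x) = 0 := by
          rw [show h x ^ 2 * σ x = h x * (h x * σ x) by ring, hx, mul_zero]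
          simp
        exact le_antisymm (h0 ▸ hφF x) zero_le
      simp [hfdef, hx, hφ0]
    · simp only [hfdef, if_neg hx]
      rw [div_mul_eq_mul_div, div_mul_eq_mul_div, div_eq_iff hx]
      ring
  have claim2 : ∀ x, ENNReal.ofReal (f x ^ 2 * σ x) ≤ φ x := by
    intro x
    by_cases hx : h x * σ x = 0
    · simp [hfdef, hx]
    · have hσx : σ x ≠ 0 := fun h0 => hx (by rw [h0, mul_zero])
      have hhx : h x ≠ 0 := fun h0 => hx (by rw [h0, zero_mul])
      have hσpos : 0 < σ x := (hσ0 x).lt_of_ne (Ne.symm hσx)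
      have hpos : 0 < h x ^ 2 * σ x := mul_pos (pow_two_pos_of_ne_zero hhx) hσpos
      have hφr : (φ x).toReal ≤ h x ^ 2 * σ x :=
        ENNReal.toReal_le_of_le_ofReal hpos.le (hφF x)
      have hfx : f x = (φ x).toReal / (h x * σ x) := by
        simp only [hfdef, if_neg hx]
      have hcalc : f x ^ 2 * σ x = (φ x).toReal ^ 2 / (h x ^ 2 * σ x) := by
        rw [hfx]
        field_simp
      rw [hcalc]
      calc ENNReal.ofReal ((φ x).toReal ^ 2 / (h x ^ 2 * σ x))
          ≤ ENNReal.ofReal ((φ x).toReal) := by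
            apply ENNReal.ofReal_le_ofReal
            rw [div_le_iff₀ hpos]
            calc (φ x).toReal ^ 2 = (φ x).toReal * (φ x).toReal := sq _
              _ ≤ (φ x).toReal * (h x ^ 2 * σ x) :=
                  mul_le_mul_of_nonneg_left hφr ENNReal.toReal_nonneg
        _ = φ x := ENNReal.ofReal_toReal (hφtop x)
  set B := ∫⁻ x, ENNReal.ofReal (f x ^ 2 * σ x) with hBdef
  have hBA : B ≤ A := lintegral_mono claim2
  have hBtop : B ≠ ⊤ := ne_top_of_le_ne_top hAtop hBA
  -- adjoint identity
  set g : ℝ → ℝ := fun y => if y ∈ Q then (1:ℝ) else 0 with hgdef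
  have hgu : (fun y => g y * u y) = fun y => Set.indicator Q u y := by
    funext y
    by_cases hy : y ∈ Q <;> simp [hgdef, Set.indicator, hy]
  have hI : (∫ x, T (fun y => f y * σ y) x * g x * u x) = A.toReal := by
    rw [hadj f g, hgu, ← hhdef]
    simp only [claim1]
    exact integral_toReal φ.measurable.aemeasurable (ae_of_all _ fun x => (hφtop x).lt_top)
  -- distribution bound
  have hdist : ∀ t : ℝ, 0 < t →
      ν {x | t < |T (fun y => f y * σ y) x|} ≤ N ^ 2 * B / ENNReal.ofReal t ^ 2 := by
    intro t ht
    have hw2 := hweak f t ht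
    rw [← hBdef] at hw2
    set X := ν {x | t < |T (fun y => f y * σ y) x|} with hXdef
    have hsq : X * ENNReal.ofReal t ^ 2 ≤ N ^ 2 * B := by
      calc X * ENNReal.ofReal t ^ 2
          = (ENNReal.ofReal t * X ^ ((1:ℝ)/2)) ^ 2 := by
            rw [mul_pow, sqrt_sq']; ring
        _ ≤ (N * B ^ ((1:ℝ)/2)) ^ 2 := pow_le_pow_left' hw2 2
        _ = N ^ 2 * B := by rw [mul_pow, sqrt_sq']
    have ht0 : (ENNReal.ofReal t) ^ 2 ≠ 0 := by
      simp [pow_eq_zero_iff, ENNReal.ofReal_eq_zero, not_le, ht]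
    have ht1 : (ENNReal.ofReal t) ^ 2 ≠ ⊤ := by
      simp [ENNReal.pow_ne_top ENNReal.ofReal_ne_top]
    rw [ENNReal.le_div_iff_mul_le (Or.inl ht0) (Or.inl ht1)]
    exact hsq
  -- main estimate
  set M := N * B ^ ((1:ℝ)/2) with hMdef
  have key : A ≤ 2 * M * νQ ^ ((1:ℝ)/2) := by
    by_cases hint : Integrable (fun x => T (fun y => f y * σ y) x * g x * u x) volume
    · -- integrable case
      set G : ℝ → ℝ := hint.1.mk _ with hGdef
      have hGmeas : Measurable G := hint.1.stronglyMeasurable_mk.measurable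
      have hGae : (fun x => T (fun y => f y * σ y) x * g x * u x) =ᵐ[volume] G :=
        hint.1.ae_eq_mk
      set G' : ℝ → ℝ := fun x => if u x = 0 then 0 else G x / u x with hG'def
      have hG'meas : Measurable G' :=
        Measurable.ite (hu (measurableSet_singleton 0)) measurable_const (hGmeas.div hu)
      -- step 1 : A ≤ ∫⁻ ofReal (T(fσ) g u)
      have step1 : A ≤ ∫⁻ x, ENNReal.ofReal (T (fun y => f y * σ y) x * g x * u x) := by
        conv_lhs => rw [← ENNReal.ofReal_toReal hAtop]
        rw [← hI]
        calc ENNReal.ofReal (∫ x, T (fun y => f y * σ y) x * g x * u x)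
            ≤ ENNReal.ofReal (∫ x, max (T (fun y => f y * σ y) x * g x * u x) 0) :=
              ENNReal.ofReal_le_ofReal
                (integral_mono hint hint.pos_part fun x => le_max_left _ _)
          _ = ∫⁻ x, ENNReal.ofReal (max (T (fun y => f y * σ y) x * g x * u x) 0) :=
              ofReal_integral_eq_lintegral_ofReal hint.pos_part
                (ae_of_all _ fun x => le_max_right _ _)
          _ = _ := by simp only [ofReal_max_zero']
      -- step 2 : rewrite with G'
      have step2 : (∫⁻ x, ENNReal.ofReal (T (fun y => f y * σ y) x * g x * u x)) =
          ∫⁻ x, ENNReal.ofReal (u x * G' x) := by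
        refine lintegral_congr_ae ?_
        filter_upwards [hGae] with x hx
        by_cases hux : u x = 0
        · rw [hux, hG'def]
          simp
        · have : G' x = G x / u x := by simp only [hG'def, if_neg hux]
          rw [this, ← hx]
          rw [mul_div_assoc']
          rw [mul_comm (u x) _, mul_div_assoc, div_self hux, mul_one]
      -- step 3 : switch to ν
      have step3 : (∫⁻ x, ENNReal.ofReal (u x * G' x)) =
          ∫⁻ x, ENNReal.ofReal (G' x) ∂ν := by
        rw [hνdef, hwdef, lintegral_withDensity_eq_lintegral_mul volume
          hu.ennreal_ofReal hG'meas.ennreal_ofReal]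
        refine lintegral_congr fun x => ?_
        simp only [Pi.mul_apply]
        rw [← ENNReal.ofReal_mul (hu0 x)]
      -- step 4-5 : layercake
      have step45 : (∫⁻ x, ENNReal.ofReal (G' x) ∂ν) ≤
          ∫⁻ t in Set.Ioi (0:ℝ), ν {x | t < |G' x|} := by
        calc (∫⁻ x, ENNReal.ofReal (G' x) ∂ν)
            ≤ ∫⁻ x, ENNReal.ofReal (|G' x|) ∂ν :=
              lintegral_mono fun x => ENNReal.ofReal_le_ofReal (le_abs_self _)
          _ = ∫⁻ t in Set.Ioi (0:ℝ), ν {x | t < |G' x|} :=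
              lintegral_eq_lintegral_meas_lt ν (ae_of_all _ fun x => abs_nonneg _)
                hG'meas.abs.aemeasurable
      -- step 6 : distribution comparison
      have step6 : (∫⁻ t in Set.Ioi (0:ℝ), ν {x | t < |G' x|}) ≤
          ∫⁻ t in Set.Ioi (0:ℝ), min νQ (N ^ 2 * B / ENNReal.ofReal t ^ 2) := by
        refine lintegral_mono_ae ((ae_restrict_iff' measurableSet_Ioi).2
          (ae_of_all _ fun t ht => ?_))
        have hbad : ν {x | ¬ (T (fun y => f y * σ y) x * g x * u x = G x)} = 0 :=
          withDensity_absolutelyContinuous volume w hGae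
        have hsub : {x | t < |G' x|} ⊆
            (Q ∩ {x | t < |T (fun y => f y * σ y) x|}) ∪
              {x | ¬ (T (fun y => f y * σ y) x * g x * u x = G x)} := by
          intro x hx
          by_cases hxg : T (fun y => f y * σ y) x * g x * u x = G x
          · left
            simp only [Set.mem_setOf_eq] at hx
            have hux : u x ≠ 0 := by
              intro hux
              rw [hG'def] at hx
              simp [hux] at hx
              exact absurd hx (not_lt.2 ht.le)
            have hG'x : G' x = T (fun y => f y * σ y) x * g x := by
              simp only [hG'def, if_neg hux, ← hxg]
              field_simp
            by_cases hxQ : x ∈ Q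
            · constructor
              · exact hxQ
              · have : g x = 1 := by simp [hgdef, hxQ]
                simp only [Set.mem_setOf_eq]
                rw [hG'x, this, mul_one] at hx
                exact hx
            · exfalso
              have : g x = 0 := by simp [hgdef, hxQ]
              rw [hG'x, this, mul_zero, abs_zero] at hx
              exact absurd hx (not_lt.2 ht.le)
          · right
            exact hxg
        refine le_min ?_ ?_
        · calc ν {x | t < |G' x|} ≤ ν ((Q ∩ _) ∪ _) := measure_mono hsub
            _ ≤ ν (Q ∩ {x | t < |T (fun y => f y * σ y) x|}) + _ := measure_union_le _ _
            _ = ν (Q ∩ {x | t < |T (fun y => f y * σ y) x|}) := by rw [hbad, add_zero]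
            _ ≤ ν Q := measure_mono Set.inter_subset_left
            _ = νQ := hνQ
        · calc ν {x | t < |G' x|} ≤ ν ((Q ∩ _) ∪ _) := measure_mono hsub
            _ ≤ ν (Q ∩ {x | t < |T (fun y => f y * σ y) x|}) + _ := measure_union_le _ _
            _ = ν (Q ∩ {x | t < |T (fun y => f y * σ y) x|}) := by rw [hbad, add_zero]
            _ ≤ ν {x | t < |T (fun y => f y * σ y) x|} := measure_mono Set.inter_subset_right
            _ ≤ N ^ 2 * B / ENNReal.ofReal t ^ 2 := hdist t ht
      -- step 7 : compute the layercake integral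
      have step7 : (∫⁻ t in Set.Ioi (0:ℝ), min νQ (N ^ 2 * B / ENNReal.ofReal t ^ 2)) ≤
          2 * M * νQ ^ ((1:ℝ)/2) := by
        rcases eq_or_ne νQ 0 with hν0 | hν0
        · calc (∫⁻ t in Set.Ioi (0:ℝ), min νQ (N ^ 2 * B / ENNReal.ofReal t ^ 2))
              ≤ ∫⁻ _ in Set.Ioi (0:ℝ), (0:ℝ≥0∞) :=
                lintegral_mono fun t => (min_le_left _ _).trans_eq hν0
            _ = 0 := lintegral_zero
            _ ≤ _ := zero_le
        rcases eq_or_ne N 0 with hN0 | hN0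
        · calc (∫⁻ t in Set.Ioi (0:ℝ), min νQ (N ^ 2 * B / ENNReal.ofReal t ^ 2))
              ≤ ∫⁻ _ in Set.Ioi (0:ℝ), (0:ℝ≥0∞) :=
                lintegral_mono fun t => (min_le_right _ _).trans_eq (by
                  simp [hN0, ENNReal.zero_div])
            _ = 0 := lintegral_zero
            _ ≤ _ := zero_le
        rcases eq_or_ne B 0 with hB0 | hB0
        · calc (∫⁻ t in Set.Ioi (0:ℝ), min νQ (N ^ 2 * B / ENNReal.ofReal t ^ 2))
              ≤ ∫⁻ _ in Set.Ioi (0:ℝ), (0:ℝ≥0∞) :=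
                lintegral_mono fun t => (min_le_right _ _).trans_eq (by
                  simp [hB0, ENNReal.zero_div])
            _ = 0 := lintegral_zero
            _ ≤ _ := zero_le
        have hB12ne : B ^ ((1:ℝ)/2) ≠ 0 :=
          (ENNReal.rpow_pos (pos_iff_ne_zero.2 hB0) hBtop).ne'
        have hM0 : M ≠ 0 := by
          rw [hMdef]
          exact mul_ne_zero hN0 hB12ne
        rcases eq_or_ne νQ ⊤ with hνT | hνT
        · have hrp : νQ ^ ((1:ℝ)/2) = ⊤ := by
            rw [hνT]
            exact ENNReal.top_rpow_of_pos (by norm_num)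
          rw [hrp, ENNReal.mul_top (mul_ne_zero (by norm_num) hM0)]
          exact le_top
        have hνh0 : νQ ^ ((1:ℝ)/2) ≠ 0 :=
          (ENNReal.rpow_pos (pos_iff_ne_zero.2 hν0) hνT).ne'
        have hνht : νQ ^ ((1:ℝ)/2) ≠ ⊤ := ENNReal.rpow_ne_top_of_nonneg (by norm_num) hνT
        rcases eq_or_ne N ⊤ with hNT | hNT
        · have hMT : M = ⊤ := by
            rw [hMdef, hNT]
            exact ENNReal.top_mul hB12ne
          rw [hMT, ENNReal.mul_top (by norm_num : (2:ℝ≥0∞) ≠ 0), ENNReal.top_mul hνh0]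
          exact le_top
        -- main case : everything finite and nonzero
        have hMt : M ≠ ⊤ :=
          ENNReal.mul_ne_top hNT (ENNReal.rpow_ne_top_of_nonneg (by norm_num) hBtop)
        have hNB : N ^ 2 * B = M ^ 2 := by rw [hMdef, mul_pow, sqrt_sq']
        set τ : ℝ≥0∞ := M * (νQ ^ ((1:ℝ)/2))⁻¹ with hτdef
        have hτ0 : τ ≠ 0 := mul_ne_zero hM0 (ENNReal.inv_ne_zero.2 hνht)
        have hτt : τ ≠ ⊤ := ENNReal.mul_ne_top hMt (ENNReal.inv_ne_top.2 hνh0)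
        set t₀ : ℝ := τ.toReal with ht₀def
        have ht₀pos : 0 < t₀ := ENNReal.toReal_pos hτ0 hτt
        have hofReal : ENNReal.ofReal t₀ = τ := by
          rw [ht₀def]
          exact ENNReal.ofReal_toReal hτt
        have hcancel : νQ * (νQ ^ ((1:ℝ)/2))⁻¹ = νQ ^ ((1:ℝ)/2) := by
          have hsplit : νQ = νQ ^ ((1:ℝ)/2) * νQ ^ ((1:ℝ)/2) := by
            conv_lhs => rw [← sqrt_sq' νQ]
            rw [sq]
          nth_rewrite 1 [hsplit]
          rw [mul_assoc, ENNReal.mul_inv_cancel hνh0 hνht, mul_one]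
        rw [show Set.Ioi (0:ℝ) = Set.Ioc 0 t₀ ∪ Set.Ioi t₀ from
          (Set.Ioc_union_Ioi_eq_Ioi ht₀pos.le).symm,
          lintegral_union measurableSet_Ioi (Set.Ioc_disjoint_Ioi le_rfl)]
        have hT1 : (∫⁻ t in Set.Ioc (0:ℝ) t₀, min νQ (N ^ 2 * B / ENNReal.ofReal t ^ 2)) ≤
            M * νQ ^ ((1:ℝ)/2) := by
          calc (∫⁻ t in Set.Ioc (0:ℝ) t₀, min νQ (N ^ 2 * B / ENNReal.ofReal t ^ 2))
              ≤ ∫⁻ _ in Set.Ioc (0:ℝ) t₀, νQ := lintegral_mono fun t => min_le_left _ _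
            _ = νQ * volume (Set.Ioc 0 t₀) := setLIntegral_const _ _
            _ = νQ * τ := by rw [Real.volume_Ioc, sub_zero, hofReal]
            _ = M * (νQ * (νQ ^ ((1:ℝ)/2))⁻¹) := by rw [hτdef]; ring
            _ = M * νQ ^ ((1:ℝ)/2) := by rw [hcancel]
        have hT2 : (∫⁻ t in Set.Ioi t₀, min νQ (N ^ 2 * B / ENNReal.ofReal t ^ 2)) ≤
            M * νQ ^ ((1:ℝ)/2) := by
          calc (∫⁻ t in Set.Ioi t₀, min νQ (N ^ 2 * B / ENNReal.ofReal t ^ 2))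
              ≤ ∫⁻ t in Set.Ioi t₀, N ^ 2 * B / ENNReal.ofReal t ^ 2 :=
                lintegral_mono fun t => min_le_right _ _
            _ = ∫⁻ t in Set.Ioi t₀, N ^ 2 * B * ENNReal.ofReal (t ^ (-2:ℝ)) := by
                refine setLIntegral_congr_fun measurableSet_Ioi (fun t ht => ?_)
                have htpos : 0 < t := ht₀pos.trans ht
                rw [div_eq_mul_inv]
                congr 1
                rw [← ENNReal.ofReal_pow htpos.le, ← ENNReal.ofReal_inv_of_pos
                  (pow_pos htpos 2), Real.rpow_neg htpos.le, Real.rpow_two]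
            _ = N ^ 2 * B * ∫⁻ t in Set.Ioi t₀, ENNReal.ofReal (t ^ (-2:ℝ)) :=
                lintegral_const_mul' _ _ (ENNReal.mul_ne_top (ENNReal.pow_ne_top hNT) hBtop)
            _ = N ^ 2 * B * ENNReal.ofReal t₀⁻¹ := by rw [tail_int ht₀pos]
            _ = M ^ 2 * τ⁻¹ := by rw [hNB, ENNReal.ofReal_inv_of_pos ht₀pos, hofReal]
            _ = M * νQ ^ ((1:ℝ)/2) := by
                rw [hτdef, ENNReal.mul_inv (Or.inl hM0) (Or.inl hMt), inv_inv, sq,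
                  mul_assoc, ← mul_assoc M M⁻¹, ENNReal.mul_inv_cancel hM0 hMt, one_mul]
        calc (∫⁻ t in Set.Ioc (0:ℝ) t₀, min νQ (N ^ 2 * B / ENNReal.ofReal t ^ 2)) +
              ∫⁻ t in Set.Ioi t₀, min νQ (N ^ 2 * B / ENNReal.ofReal t ^ 2)
            ≤ M * νQ ^ ((1:ℝ)/2) + M * νQ ^ ((1:ℝ)/2) := add_le_add hT1 hT2
          _ = 2 * M * νQ ^ ((1:ℝ)/2) := by ring
      exact step1.trans (step2 ▸ step3 ▸ (step45.trans (step6.trans step7)))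
    · -- non-integrable case : the adjoint integral is 0 so A = 0
      have h0 : A.toReal = 0 := by rw [← hI, integral_undef hint]
      have hA0 : A = 0 := by
        rw [← ENNReal.ofReal_toReal hAtop, h0]
        simp
      rw [hA0]
      exact zero_le
  -- conclude
  have key2 : A ≤ 2 * N * νQ ^ ((1:ℝ)/2) * A ^ ((1:ℝ)/2) := by
    refine key.trans ?_
    have hB12 : B ^ ((1:ℝ)/2) ≤ A ^ ((1:ℝ)/2) := ENNReal.rpow_le_rpow hBA (by norm_num)
    calc 2 * M * νQ ^ ((1:ℝ)/2) = 2 * N * νQ ^ ((1:ℝ)/2) * B ^ ((1:ℝ)/2) := by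
          rw [hMdef]; ring
      _ ≤ 2 * N * νQ ^ ((1:ℝ)/2) * A ^ ((1:ℝ)/2) := mul_le_mul_right hB12 _
  rcases eq_or_ne A 0 with hA0 | hA0
  · rw [hA0]
    exact zero_le
  · have h12ne : A ^ ((1:ℝ)/2) ≠ 0 :=
      (ENNReal.rpow_pos (pos_iff_ne_zero.mpr hA0) hAtop).ne'
    have h12top : A ^ ((1:ℝ)/2) ≠ ⊤ := ENNReal.rpow_ne_top_of_nonneg (by norm_num) hAtop
    have hAsplit : A = A ^ ((1:ℝ)/2) * A ^ ((1:ℝ)/2) := by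
      conv_lhs => rw [← sqrt_sq' A]
      rw [sq]
    have hchalf : A ^ ((1:ℝ)/2) ≤ 2 * N * νQ ^ ((1:ℝ)/2) := by
      refine (ENNReal.mul_le_mul_iff_left h12ne h12top).mp ?_
      rw [← hAsplit]
      exact key2
    calc A = (A ^ ((1:ℝ)/2)) ^ 2 := (sqrt_sq' A).symm
      _ ≤ (2 * N * νQ ^ ((1:ℝ)/2)) ^ 2 := pow_le_pow_left' hchalf 2
      _ = 4 * N ^ 2 * νQ := by
          rw [mul_pow, mul_pow, sqrt_sq']
          norm_num
end
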